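/- arXiv:1905.09209 — 7 statements merged into one kernel-verified Lean document; each statement's English description precedes it below -/
import Mathlib

section
/- There exists a universal constant c > 0 with the following property. Let d ≥ 2, let e₁ be the first standard basis vector of R^d, let 0 < γ ≤ 1, let 0 < α < γ and 0 < ε ≤ α, and let S = {(γe₁, +1), (−γe₁, −1)}. Then there exists a finite sequence w₁, w₂, …, w_T of unit vectors in R^d with T ≥ (1/2)·exp(c(d−1)ε²/(γ+ε)²) such that for every t: (i) ⟨w_t, γe₁⟩ = ε and ⟨w_t, −γe₁⟩ = −ε, so w_t linearly separates S with margin exactly ε ≤ α; and (ii) for every i < t, ⟨w_t, γe₁ − αw_i⟩ > 0 and ⟨w_t, −γe₁ + αw_i⟩ < 0, i.e. w_t correctly classifies all adversarial examples generated from S at the earlier models w_i with perturbation radius α. -/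
open Finset in
lemma sum_prod_bool (n : ℕ) (g : Fin n → Bool → ℝ) :
    ∑ u : Fin n → Bool, ∏ i, g i (u i) = ∏ i, (g i false + g i true) := by
  rw [← Fintype.piFinset_univ, Finset.sum_prod_piFinset]
  exact Finset.prod_congr rfl (by intros; simp [add_comm])

open Finset in
lemma pow_card_filter {n : ℕ} (p : Fin n → Prop) [DecidablePred p] (x : ℝ) :
    x ^ ((univ.filter p).card) = ∏ i, (if p i then x else 1) := by
  rw [← Finset.prod_filter, Finset.prod_const]

open Finset in
lemma count_bound (n m : ℕ) (v : Fin n → Bool) (x : ℝ) (hx : 1 ≤ x) :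
    ((univ.filter (fun u : Fin n → Bool =>
        m ≤ (univ.filter (fun i => u i = v i)).card)).card : ℝ) * x ^ m ≤ (1 + x) ^ n := by
  have hx0 : 0 < x := lt_of_lt_of_le one_pos hx
  calc ((univ.filter (fun u : Fin n → Bool =>
        m ≤ (univ.filter (fun i => u i = v i)).card)).card : ℝ) * x ^ m
      = ∑ u ∈ univ.filter (fun u : Fin n → Bool =>
          m ≤ (univ.filter (fun i => u i = v i)).card), x ^ m := by
        rw [Finset.sum_const, nsmul_eq_mul]
    _ ≤ ∑ u ∈ univ.filter (fun u : Fin n → Bool =>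
          m ≤ (univ.filter (fun i => u i = v i)).card),
          x ^ ((univ.filter (fun i => u i = v i)).card) := by
        refine Finset.sum_le_sum fun u hu => ?_
        exact pow_le_pow_right₀ hx (Finset.mem_filter.mp hu).2
    _ ≤ ∑ u : Fin n → Bool, x ^ ((univ.filter (fun i => u i = v i)).card) := by
        refine Finset.sum_le_sum_of_subset_of_nonneg (Finset.filter_subset _ _) ?_
        intro u _ _; positivity
    _ = ∑ u : Fin n → Bool, ∏ i, (if u i = v i then x else 1) := by
        refine Finset.sum_congr rfl fun u _ => pow_card_filter _ _
    _ = ∏ i : Fin n, ((if false = v i then x else 1) + (if true = v i then x else 1)) := by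
        exact sum_prod_bool n (fun i b => if b = v i then x else 1)
    _ = ∏ _i : Fin n, (1 + x) := by
        refine Finset.prod_congr rfl fun i _ => by cases v i <;> simp [add_comm]
    _ = (1 + x) ^ n := by rw [Finset.prod_const, Finset.card_univ, Fintype.card_fin]

open Finset in
lemma greedy_pick {V : Type*} [Fintype V] [DecidableEq V] [Nonempty V]
    (good : V → V → Prop) [DecidableRel good]
    (hsymm : ∀ u v, good u v → good v u)
    (hself : ∀ v, ¬ good v v)
    (B : ℕ) (hB : ∀ v, (univ.filter (fun u => ¬ good u v)).card ≤ B) :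
    ∀ T : ℕ, T * B ≤ Fintype.card V →
      ∃ f : Fin T → V, ∀ i j : Fin T, i ≠ j → good (f i) (f j) := by
  intro T
  induction T with
  | zero => exact fun _ => ⟨Fin.elim0, fun i => i.elim0⟩
  | succ T ih =>
    intro hT
    obtain ⟨f, hf⟩ := ih (le_trans (Nat.mul_le_mul_right _ (Nat.le_succ T)) hT)
    have hB1 : 1 ≤ B := by
      refine le_trans ?_ (hB (Classical.arbitrary V))
      rw [Nat.one_le_iff_ne_zero, ← Nat.pos_iff_ne_zero, Finset.card_pos]
      exact ⟨Classical.arbitrary V, by simp [hself]⟩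
    set S : Finset V := Finset.univ.biUnion
      (fun i : Fin T => univ.filter (fun u => ¬ good u (f i))) with hS
    have hScard : S.card < Fintype.card V := by
      have h1 : S.card ≤ T * B := by
        refine le_trans (Finset.card_biUnion_le) ?_
        calc ∑ i : Fin T, (univ.filter (fun u => ¬ good u (f i))).card
            ≤ ∑ _i : Fin T, B := Finset.sum_le_sum fun i _ => hB (f i)
          _ = T * B := by simp [mul_comm]
      have h2 : T * B + B ≤ Fintype.card V := by
        rw [Nat.succ_mul] at hT; exact hT
      omega
    obtain ⟨v, hv⟩ : ∃ v, v ∉ S := by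
      by_contra h
      push_neg at h
      have : S = univ := Finset.eq_univ_iff_forall.mpr h
      rw [this, Finset.card_univ] at hScard; exact lt_irrefl _ hScard
    have hvg : ∀ i : Fin T, good v (f i) := by
      intro i
      by_contra h
      exact hv (Finset.mem_biUnion.mpr ⟨i, Finset.mem_univ _, by simp [h]⟩)
    refine ⟨Fin.cons v f, ?_⟩
    intro i j hij
    rcases Fin.eq_zero_or_eq_succ i with rfl | ⟨i', rfl⟩ <;>
      rcases Fin.eq_zero_or_eq_succ j with rfl | ⟨j', rfl⟩
    · exact absurd rfl hij
    · simpa using hvg j'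
    · simpa using hsymm _ _ (hvg i')
    · simpa using hf i' j' (by simpa [Fin.succ_inj] using hij)

lemma key_ineq {μ : ℝ} (h0 : 0 < μ) (h2 : μ ≤ 1/2) :
    (1 + Real.exp μ) * Real.exp (μ^2/24) ≤ 2 * Real.exp (μ*(1+μ)/2) := by
  have ha : Real.exp μ ≤ 1 + μ + 3/4*μ^2 := by
    have h := Real.exp_bound (x := μ) (by rw [abs_of_pos h0]; linarith) (n := 2) (by norm_num)
    rw [abs_of_pos h0] at h
    have h' := (abs_sub_le_iff.mp h).1
    simp [Finset.sum_range_succ] at h'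
    nlinarith [h']
  have hμ2 : μ^2 ≤ 1/4 := by nlinarith
  have hμ3 : μ^3 ≤ μ^2/2 := by nlinarith
  have hμ4 : μ^4 ≤ μ^2/4 := by nlinarith [sq_nonneg μ, sq_nonneg (μ^2)]
  have hb : Real.exp (μ^2/24) ≤ 1 + μ^2/12 := by
    have h1 : Real.exp (μ^2/24) ≤ 1/(1 - μ^2/24) :=
      Real.exp_bound_div_one_sub_of_interval (by positivity) (by nlinarith)
    have h2' : 1/(1 - μ^2/24) ≤ 1 + μ^2/12 := by
      rw [div_le_iff₀ (by nlinarith)]; nlinarith [hμ2, sq_nonneg (μ^2)]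
    linarith
  have hc : 2 + μ + μ^2 ≤ 2 * Real.exp (μ*(1+μ)/2) := by
    have h := Real.add_one_le_exp (μ*(1+μ)/2)
    nlinarith [h]
  calc (1 + Real.exp μ) * Real.exp (μ^2/24)
      ≤ (2 + μ + 3/4*μ^2) * (1 + μ^2/12) := by
        apply mul_le_mul (by linarith) hb (Real.exp_pos _).le (by nlinarith)
    _ ≤ 2 + μ + μ^2 := by nlinarith [hμ3, hμ4]
    _ ≤ 2 * Real.exp (μ*(1+μ)/2) := hc

open scoped RealInnerProductSpace

set_option maxHeartbeats 1000000 in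
/-- There is a universal constant `c > 0` such that for every `d ≥ 2`,
`0 < γ ≤ 1`, `0 < α < γ`, `0 < ε ≤ α`, and the dataset `S = {(γe₁,+1), (−γe₁,−1)}`,
there is a sequence `w₁, …, w_T` of unit vectors with
`T ≥ (1/2)·exp(c(d−1)ε²/(γ+ε)²)` such that each `w_t` has margin exactly `ε` on `S`
and correctly classifies all adversarial examples generated at earlier models. -/
theorem erm_adversarial_training_slow_margin :
    ∃ c : ℝ, 0 < c ∧
      ∀ (d : ℕ) (hd : 2 ≤ d), ∀ γ α ε : ℝ, 0 < γ → γ ≤ 1 → 0 < α → α < γ → 0 < ε → ε ≤ α →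
        ∃ (T : ℕ) (w : Fin T → EuclideanSpace ℝ (Fin d)),
          (1 / 2 : ℝ) * Real.exp (c * ((d : ℝ) - 1) * ε ^ 2 / (γ + ε) ^ 2) ≤ (T : ℝ) ∧
          ∀ t : Fin T, ‖w t‖ = 1 ∧
            ⟪w t, γ • (EuclideanSpace.single (⟨0, by omega⟩ : Fin d) (1 : ℝ))⟫ = ε ∧
            ⟪w t, -(γ • (EuclideanSpace.single (⟨0, by omega⟩ : Fin d) (1 : ℝ)))⟫ = -ε ∧
            ∀ i : Fin T, i < t →
              0 < ⟪w t, γ • (EuclideanSpace.single (⟨0, by omega⟩ : Fin d) (1 : ℝ)) - α • w i⟫ ∧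
              ⟪w t, -(γ • (EuclideanSpace.single (⟨0, by omega⟩ : Fin d) (1 : ℝ))) + α • w i⟫ < 0 := by
  classical
  refine ⟨1/24, by norm_num, ?_⟩
  intro d hd γ α ε hγ hγ1 hα hαγ hε hεα
  obtain ⟨n, rfl⟩ : ∃ n, d = n + 1 := ⟨d - 1, by omega⟩
  have hn : 1 ≤ n := by omega
  have hn0 : (0:ℝ) < n := by exact_mod_cast hn
  have hεγ : ε < γ := lt_of_le_of_lt hεα hαγ
  have hγε : (0:ℝ) < γ + ε := by linarith
  set μ : ℝ := ε / (γ + ε) with hμdef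
  have hμ0 : 0 < μ := div_pos hε hγε
  have hμhalf : μ ≤ 1/2 := by
    rw [hμdef, div_le_iff₀ hγε]; linarith
  set m : ℕ := ⌈(1+μ) * (n:ℝ) / 2⌉₊ with hmdef
  have hm_ge : (1+μ) * (n:ℝ) / 2 ≤ (m:ℝ) := Nat.le_ceil _
  have hm_lt : (m:ℝ) < (1+μ) * (n:ℝ) / 2 + 1 :=
    Nat.ceil_lt_add_one (by positivity)
  have hm_le_n : m ≤ n := by
    rw [hmdef]
    refine Nat.ceil_le.mpr ?_
    rw [div_le_iff₀ (by norm_num : (0:ℝ) < 2)]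
    nlinarith
  -- combinatorics
  set agree : (Fin n → Bool) → (Fin n → Bool) → ℕ :=
    fun u v => (Finset.univ.filter (fun i => u i = v i)).card with hagreedef
  set good : (Fin n → Bool) → (Fin n → Bool) → Prop :=
    fun u v => agree u v < m with hgooddef
  have hsymm : ∀ u v, good u v → good v u := by
    intro u v h
    have he' : (Finset.univ.filter (fun i => v i = u i))
        = (Finset.univ.filter (fun i => u i = v i)) :=
      Finset.filter_congr (by intros; simp [eq_comm])
    have he : agree v u = agree u v := congrArg Finset.card he'
    simpa [hgooddef, he] using h
  have hagself : ∀ v, agree v v = n := by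
    intro v
    rw [hagreedef]
    simp
  have hself : ∀ v, ¬ good v v := by
    intro v
    simp only [hgooddef, not_lt, hagself]
    exact hm_le_n
  set B : ℕ := Finset.univ.sup
    (fun v : Fin n → Bool => (Finset.univ.filter (fun u => ¬ good u v)).card) with hBdef
  have hB : ∀ v, (Finset.univ.filter (fun u => ¬ good u v)).card ≤ B :=
    fun v => Finset.le_sup (f := fun v : Fin n → Bool => (Finset.univ.filter (fun u => ¬ good u v)).card) (Finset.mem_univ v)
  have hcardV : Fintype.card (Fin n → Bool) = 2^n := by simp
  have hBle : B ≤ 2^n := by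
    rw [hBdef]
    refine Finset.sup_le fun v _ => ?_
    calc (Finset.univ.filter (fun u => ¬ good u v)).card
        ≤ Finset.univ.card := Finset.card_filter_le _ _
      _ = 2^n := by rw [Finset.card_univ, hcardV]
  have hB1 : 1 ≤ B := by
    refine le_trans ?_ (hB (fun _ => true))
    rw [Nat.one_le_iff_ne_zero, ← Nat.pos_iff_ne_zero, Finset.card_pos]
    exact ⟨fun _ => true, by simp [hself]⟩
  have hBreal : (B:ℝ) * (Real.exp μ) ^ m ≤ (1 + Real.exp μ)^n := by
    obtain ⟨v₀, -, hv₀⟩ := Finset.exists_mem_eq_sup Finset.univ Finset.univ_nonempty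
      (fun v : Fin n → Bool => (Finset.univ.filter (fun u => ¬ good u v)).card)
    rw [hBdef, hv₀]
    have h := count_bound n m v₀ (Real.exp μ) (Real.one_le_exp hμ0.le)
    simpa [hgooddef, hagreedef, not_lt] using h
  set T : ℕ := 2^n / B with hTdef
  have hBpos : 0 < B := hB1
  have hT1 : 1 ≤ T := (Nat.one_le_div_iff hBpos).mpr hBle
  obtain ⟨f, hf⟩ := greedy_pick good hsymm hself B hB T
    (by rw [hcardV]; exact Nat.div_mul_le_self _ _)
  -- numerics: E ≤ T + 1 etc.
  have hx1 : (1:ℝ) ≤ Real.exp μ := Real.one_le_exp hμ0.le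
  set E : ℝ := Real.exp ((n:ℝ) * (μ^2/24)) with hEdef
  have hBE : (B:ℝ) * E ≤ 2^n := by
    have hkey := key_ineq hμ0 hμhalf
    have hxm : (0:ℝ) < (Real.exp μ)^m := by positivity
    rw [← mul_le_mul_iff_of_pos_right hxm]
    calc (B:ℝ) * E * (Real.exp μ)^m = ((B:ℝ) * (Real.exp μ)^m) * E := by ring
      _ ≤ (1 + Real.exp μ)^n * E := by
          refine mul_le_mul_of_nonneg_right hBreal (by positivity)
      _ = ((1 + Real.exp μ) * Real.exp (μ^2/24))^n := by
          rw [mul_pow, hEdef, Real.exp_nat_mul]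
      _ ≤ (2 * Real.exp (μ*(1+μ)/2))^n := by
          refine pow_le_pow_left₀ (by positivity) hkey n
      _ = 2^n * Real.exp ((n:ℝ) * (μ*(1+μ)/2)) := by
          rw [mul_pow, Real.exp_nat_mul]
      _ ≤ 2^n * Real.exp (μ * (m:ℝ)) := by
          refine mul_le_mul_of_nonneg_left (Real.exp_le_exp.mpr ?_) (by positivity)
          calc (n:ℝ) * (μ*(1+μ)/2) = μ * ((1+μ) * (n:ℝ) / 2) := by ring
            _ ≤ μ * (m:ℝ) := mul_le_mul_of_nonneg_left hm_ge hμ0.le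
      _ = 2^n * (Real.exp μ)^m := by rw [mul_comm μ (m:ℝ), Real.exp_nat_mul]
      _ = (2^n : ℝ) * (Real.exp μ)^m := by norm_num
  have hTE : E < (T:ℝ) + 1 := by
    have hmod := Nat.div_add_mod (2^n) B
    have hmodlt := Nat.mod_lt (2^n) hBpos
    have h2n : (2^n : ℝ) < (B:ℝ) * ((T:ℝ) + 1) := by
      have : (B:ℝ) * (T:ℝ) + ((2^n % B : ℕ):ℝ) = (2^n:ℝ) := by
        exact_mod_cast congrArg (Nat.cast : ℕ → ℝ) hmod
      have hl : ((2^n % B : ℕ):ℝ) < (B:ℝ) := by exact_mod_cast hmodlt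
      nlinarith
    have hBr : (0:ℝ) < B := by exact_mod_cast hBpos
    calc E ≤ (2^n : ℝ) / B := by
          rw [le_div_iff₀ hBr]; calc E * B = B * E := by ring
            _ ≤ 2^n := hBE
      _ < (T:ℝ) + 1 := by rw [div_lt_iff₀ hBr]; nlinarith
  -- geometry
  set s : ℝ := ε / γ with hsdef
  have hs0 : 0 < s := div_pos hε hγ
  have hs1 : s < 1 := (div_lt_one hγ).mpr hεγ
  have hr2 : (0:ℝ) < 1 - s^2 := by nlinarith
  set ρ : ℝ := Real.sqrt ((1 - s^2)/(n:ℝ)) with hρdef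
  have hρ2 : ρ^2 = (1 - s^2)/(n:ℝ) := Real.sq_sqrt (by positivity)
  set σ : Bool → ℝ := fun b => if b then 1 else -1 with hσdef
  set w : Fin T → EuclideanSpace ℝ (Fin (n+1)) :=
    fun t => WithLp.toLp 2 (Fin.cons s (fun i => ρ * σ (f t i)) : Fin (n+1) → ℝ) with hwdef
  have hww : ∀ t t' : Fin T,
      ⟪w t, w t'⟫ = s^2 + ρ^2 * (2 * (agree (f t) (f t') : ℝ) - n) := by
    intro t t'
    rw [PiLp.inner_apply]
    have : ∀ j : Fin (n+1), ⟪(w t) j, (w t') j⟫ = (w t) j * (w t') j := by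
      intro j; simp [RCLike.inner_apply, conj_trivial, mul_comm]
    simp only [this]
    rw [Fin.sum_univ_succ]
    have hc0 : ∀ t'' : Fin T, (w t'') (0 : Fin (n+1)) = s := fun _ => rfl
    have hcs : ∀ (t'' : Fin T) (i : Fin n), (w t'') i.succ = ρ * σ (f t'' i) := fun _ _ => rfl
    rw [hc0, hc0]
    simp only [hcs]
    have hterm : ∀ i : Fin n, (ρ * σ (f t i)) * (ρ * σ (f t' i))
        = ρ^2 * (2 * (if f t i = f t' i then (1:ℝ) else 0) - 1) := by
      intro i
      rcases Bool.eq_false_or_eq_true (f t i) with h1 | h1 <;>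
        rcases Bool.eq_false_or_eq_true (f t' i) with h2 | h2 <;>
          simp [hσdef, h1, h2] <;> ring
    simp only [hterm]
    rw [← Finset.mul_sum, Finset.sum_sub_distrib, ← Finset.mul_sum, Finset.sum_boole,
      Finset.sum_const, Finset.card_univ]
    simp only [hagreedef]
    -- push_cast (not needed)
    simp [Fintype.card_fin]
    ring
  have hnorm : ∀ t : Fin T, ‖w t‖ = 1 := by
    intro t
    have hsq : ‖w t‖^2 = 1 := by
      rw [← real_inner_self_eq_norm_sq, hww t t, hagself]
      rw [hρ2]
      field_simp
      ring
    have h0 := norm_nonneg (w t)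
    have : (‖w t‖ - 1) * (‖w t‖ + 1) = 0 := by linear_combination hsq
    rcases mul_eq_zero.mp this with h | h
    · linarith
    · linarith
  have hj0 : ∀ (h : 0 < n + 1), (⟨0, h⟩ : Fin (n+1)) = 0 := by
    intro h; ext; simp
  have hsingle : ∀ t : Fin T,
      ⟪w t, γ • (EuclideanSpace.single (0 : Fin (n+1)) (1 : ℝ))⟫ = ε := by
    intro t
    rw [real_inner_smul_right, EuclideanSpace.inner_single_right]
    have : (w t) (0 : Fin (n+1)) = s := rfl
    rw [this]
    simp only [map_one, one_mul, conj_trivial]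
    rw [hsdef]
    field_simp
  have hwwlt : ∀ t i : Fin T, i ≠ t → ⟪w t, w i⟫ < ε / α := by
    intro t i hne
    have hag : agree (f t) (f i) < m := hf t i (fun h => hne h.symm)
    have h1 : (agree (f t) (f i) : ℝ) < (1+μ)*(n:ℝ)/2 := by
      have hnat : agree (f t) (f i) + 1 ≤ m := hag
      have : (agree (f t) (f i) : ℝ) + 1 ≤ (m:ℝ) := by exact_mod_cast hnat
      linarith
    have hρ2pos : (0:ℝ) < ρ^2 := by rw [hρ2]; positivity
    have h2 : ρ^2 * (2*(agree (f t) (f i):ℝ) - n) < ρ^2 * (μ*(n:ℝ)) := by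
      refine mul_lt_mul_of_pos_left ?_ hρ2pos
      linarith
    have h3 : ρ^2 * (μ*(n:ℝ)) = (1 - s^2)*μ := by
      rw [hρ2]; field_simp
    have h4 : s^2 + (1 - s^2)*μ = s := by
      rw [hμdef, hsdef]
      field_simp
      ring
    have h5 : s < ε/α := by
      rw [hsdef]
      exact div_lt_div_of_pos_left hε hα hαγ
    rw [hww t i]
    linarith
  -- assemble
  refine ⟨T, w, ?_, ?_⟩
  · -- T lower bound
    have hexp : (1:ℝ)/24 * (((n:ℕ)+1:ℝ) - 1) * ε^2 / (γ+ε)^2 = (n:ℝ) * (μ^2/24) := by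
      rw [hμdef, div_pow]
      field_simp
      ring
    push_cast at hexp ⊢
    rw [hexp]
    rw [← hEdef]
    have hTr : (1:ℝ) ≤ (T:ℝ) := by exact_mod_cast hT1
    rcases le_or_gt E 2 with hE2 | hE2
    · linarith
    · linarith
  · intro t
    simp only [hj0]
    have hM : ⟪w t, γ • (EuclideanSpace.single (0 : Fin (n+1)) (1 : ℝ))⟫ = ε :=
      hsingle t
    refine ⟨hnorm t, hM, ?_, ?_⟩
    · rw [inner_neg_right, hM]
    · intro i hit
      have hlt : ⟪w t, w i⟫ < ε/α := hwwlt t i (fun h => absurd h.symm (ne_of_lt hit).symm)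
      have hprod : α * ⟪w t, w i⟫ < ε := by
        have := mul_lt_mul_of_pos_left hlt hα
        rwa [mul_div_cancel₀ ε (ne_of_gt hα)] at this
      have hM0 : ⟪w t, (EuclideanSpace.single (0 : Fin (n+1)) (1:ℝ))⟫ = s := by
        rw [EuclideanSpace.inner_single_right]
        have : (w t) (0 : Fin (n+1)) = s := rfl
        rw [this]; simp
      have hγs : γ * s = ε := by rw [hsdef]; field_simp
      constructor
      · rw [inner_sub_right, real_inner_smul_right, real_inner_smul_right, hM0]
        linarith
      · rw [inner_add_right, inner_neg_right, real_inner_smul_right, real_inner_smul_right, hM0]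
        linarith
end

section
/- There exists a universal constant c > 0 such that for every dimension d ≥ 2 and every 0 < ε < 1, there exist m ≥ (1/2)·exp(c·d·ε²) unit vectors w₁, …, w_m in R^d with ⟨w_i, w_j⟩ ≤ ε for all i ≠ j. Equivalently, the maximal size N(d,ε) of a spherical code in R^d with pairwise inner products below ε satisfies N(d,ε) ≥ (1/2)·exp(c·d·ε²). -/
open scoped RealInnerProductSpace
open Finset

private def hdist {d : ℕ} (x y : Fin d → Bool) : ℕ :=
  (Finset.univ.filter fun i => x i ≠ y i).card

private lemma hdist_symm {d : ℕ} (x y : Fin d → Bool) : hdist x y = hdist y x := by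
  unfold hdist
  congr 1
  apply Finset.filter_congr
  intro i _
  simp [ne_comm]

private lemma hdist_self {d : ℕ} (x : Fin d → Bool) : hdist x x = 0 := by
  simp [hdist]

private lemma ball_card_le {d : ℕ} (x : Fin d → Bool) (r : ℕ) :
    (Finset.univ.filter fun y => hdist x y ≤ r).card ≤ ∑ k ∈ Finset.range (r+1), d.choose k := by
  classical
  have h : (Finset.univ.filter fun y => hdist x y ≤ r).card ≤
      ((Finset.range (r+1)).biUnion fun k =>
        Finset.powersetCard k (Finset.univ : Finset (Fin d))).card :=
    Finset.card_le_card_of_injOn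
      (fun y : Fin d → Bool => Finset.univ.filter fun i => x i ≠ y i) ?_ ?_
  · refine h.trans_eq ?_
    rw [Finset.card_biUnion]
    · refine Finset.sum_congr rfl fun k _ => ?_
      rw [Finset.card_powersetCard, Finset.card_univ, Fintype.card_fin]
    · intro a _ b _ hab
      apply Finset.disjoint_left.mpr
      intro s hs hs'
      rw [Finset.mem_powersetCard] at hs hs'
      exact hab (hs.2.symm.trans hs'.2)
  · intro y hy
    rw [Finset.mem_coe, Finset.mem_filter] at hy
    rw [Finset.mem_coe]
    apply Finset.mem_biUnion.mpr
    refine ⟨hdist x y, Finset.mem_range.mpr (Nat.lt_succ_of_le hy.2), ?_⟩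
    rw [Finset.mem_powersetCard]
    exact ⟨Finset.subset_univ _, rfl⟩
  · intro y₁ h₁ y₂ h₂ he
    funext i
    have he' : (Finset.univ.filter fun i => x i ≠ y₁ i) =
        (Finset.univ.filter fun i => x i ≠ y₂ i) := he
    have h1 : (i ∈ Finset.univ.filter fun i => x i ≠ y₁ i) ↔
        (i ∈ Finset.univ.filter fun i => x i ≠ y₂ i) := by rw [he']
    simp only [Finset.mem_filter, Finset.mem_univ, true_and] at h1
    by_cases hx : x i ≠ y₁ i
    · have hx2 : x i ≠ y₂ i := h1.mp hx
      revert hx hx2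
      cases x i <;> cases y₁ i <;> cases y₂ i <;> simp
    · have hx2 : ¬ x i ≠ y₂ i := fun h => hx (h1.mpr h)
      push_neg at hx hx2
      rw [← hx, ← hx2]

private lemma exists_code (d D : ℕ) (hD : 1 ≤ D) :
    ∃ C : Finset (Fin d → Bool),
      (∀ x ∈ C, ∀ y ∈ C, x ≠ y → D ≤ hdist x y) ∧
      2 ^ d ≤ C.card * ∑ k ∈ Finset.range D, d.choose k := by
  classical
  set P : Finset (Fin d → Bool) → Prop :=
    fun C => ∀ x ∈ C, ∀ y ∈ C, x ≠ y → D ≤ hdist x y with hP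
  set S : Finset (Finset (Fin d → Bool)) := Finset.univ.filter P with hS
  have hne : S.Nonempty := ⟨∅, by simp [hS, hP]⟩
  obtain ⟨C, hCS, hmax⟩ := S.exists_max_image Finset.card hne
  have hCP : P C := (Finset.mem_filter.mp hCS).2
  refine ⟨C, hCP, ?_⟩
  -- covering property
  have hcov : ∀ y : Fin d → Bool, ∃ x ∈ C, hdist x y ≤ D - 1 := by
    intro y
    by_contra hcon
    push_neg at hcon
    have hfar : ∀ x ∈ C, D ≤ hdist x y := by
      intro x hx
      have := hcon x hx
      omega
    have hyC : y ∉ C := by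
      intro hy
      have := hfar y hy
      rw [hdist_self] at this
      omega
    have hins : P (insert y C) := by
      intro a ha b hb hab
      rcases Finset.mem_insert.mp ha with ha' | ha' <;>
        rcases Finset.mem_insert.mp hb with hb' | hb'
      · exact absurd (ha'.trans hb'.symm) hab
      · subst ha'; rw [hdist_symm]; exact hfar b hb'
      · subst hb'; exact hfar a ha'
      · exact hCP a ha' b hb' hab
    have hmem : insert y C ∈ S := Finset.mem_filter.mpr ⟨Finset.mem_univ _, hins⟩
    have := hmax _ hmem
    rw [Finset.card_insert_of_notMem hyC] at this
    omega
  -- counting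
  have hsub : (Finset.univ : Finset (Fin d → Bool)) ⊆
      C.biUnion fun x => Finset.univ.filter fun y => hdist x y ≤ D - 1 := by
    intro y _
    obtain ⟨x, hx, hxy⟩ := hcov y
    exact Finset.mem_biUnion.mpr ⟨x, hx, Finset.mem_filter.mpr ⟨Finset.mem_univ _, hxy⟩⟩
  have h1 : (2:ℕ) ^ d = (Finset.univ : Finset (Fin d → Bool)).card := by
    rw [Finset.card_univ]
    simp [Fintype.card_fun]
  calc (2:ℕ)^d = (Finset.univ : Finset (Fin d → Bool)).card := h1
    _ ≤ (C.biUnion fun x => Finset.univ.filter fun y => hdist x y ≤ D - 1).card :=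
        Finset.card_le_card hsub
    _ ≤ ∑ x ∈ C, (Finset.univ.filter fun y => hdist x y ≤ D - 1).card :=
        Finset.card_biUnion_le
    _ ≤ ∑ x ∈ C, ∑ k ∈ Finset.range (D - 1 + 1), d.choose k :=
        Finset.sum_le_sum fun x _ => ball_card_le x (D - 1)
    _ = C.card * ∑ k ∈ Finset.range D, d.choose k := by
        have hD' : D - 1 + 1 = D := by omega
        rw [Finset.sum_const, smul_eq_mul, hD']

private lemma chernoff (d r : ℕ) (ε : ℝ) (hε0 : 0 < ε) (hε1 : ε < 1)
    (hr : (r:ℝ) ≤ (1-ε)*d/2) (hrd : r ≤ d) :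
    Real.exp (ε^2*d/2) * (∑ k ∈ Finset.range (r+1), (d.choose k : ℝ)) ≤ 2^d := by
  set l : ℝ := Real.exp (-(2*ε)) with hl
  have hl0 : 0 < l := Real.exp_pos _
  have hl1 : l ≤ 1 := Real.exp_le_one_iff.mpr (by linarith)
  have hlr : 0 < l ^ r := pow_pos hl0 r
  -- step 1: l^r * S ≤ (1+l)^d
  have step1 : l ^ r * (∑ k ∈ Finset.range (r+1), (d.choose k : ℝ)) ≤ (1 + l)^d := by
    rw [Finset.mul_sum]
    calc ∑ k ∈ Finset.range (r+1), l ^ r * (d.choose k : ℝ)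
        ≤ ∑ k ∈ Finset.range (r+1), l ^ k * (d.choose k : ℝ) := by
          apply Finset.sum_le_sum
          intro k hk
          have hk' : k ≤ r := Nat.lt_succ_iff.mp (Finset.mem_range.mp hk)
          exact mul_le_mul_of_nonneg_right (pow_le_pow_of_le_one hl0.le hl1 hk')
            (Nat.cast_nonneg _)
      _ ≤ ∑ k ∈ Finset.range (d+1), l ^ k * (d.choose k : ℝ) := by
          apply Finset.sum_le_sum_of_subset_of_nonneg
          · exact Finset.range_subset_range.mpr (by omega)
          · intro k _ _
            positivity
      _ = (l + 1)^d := by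
          rw [add_pow]
          refine Finset.sum_congr rfl fun k _ => ?_
          ring
      _ = (1 + l)^d := by ring
  -- step 2: exp(E) * (1+l)^d ≤ 2^d * l^r
  have step2 : Real.exp (ε^2*d/2) * (1 + l)^d ≤ 2^d * l ^ r := by
    have hcosh : (1 + l) = 2 * (Real.exp (-ε) * Real.cosh ε) := by
      rw [Real.cosh_eq, hl]
      have h1 : Real.exp (-ε) * Real.exp ε = 1 := by rw [← Real.exp_add]; simp
      have h2 : Real.exp (-ε) * Real.exp (-ε) = Real.exp (-(2*ε)) := by
        rw [← Real.exp_add]; ring_nf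
      field_simp
      nlinarith [h1, h2]
    have hch : Real.cosh ε ≤ Real.exp (ε^2/2) := Real.cosh_le_exp_half_sq ε
    have hchpos : (0:ℝ) < Real.cosh ε := Real.cosh_pos (x := ε)
    have hb : (1 + l)^d ≤ 2^d * Real.exp (-ε*d) * Real.exp (ε^2/2*d) := by
      rw [hcosh, mul_pow, mul_pow]
      have h3 : Real.exp (-ε) ^ d = Real.exp (-ε*d) := by
        rw [← Real.exp_nat_mul]; ring_nf
      have h4 : Real.cosh ε ^ d ≤ Real.exp (ε^2/2*d) := by
        calc Real.cosh ε ^ d ≤ (Real.exp (ε^2/2))^d :=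
              pow_le_pow_left₀ hchpos.le hch d
          _ = Real.exp (ε^2/2*d) := by rw [← Real.exp_nat_mul]; ring_nf
      rw [h3, mul_assoc]
      apply mul_le_mul_of_nonneg_left _ (by positivity)
      exact mul_le_mul_of_nonneg_left h4 (Real.exp_pos _).le
    have hlrbound : Real.exp (ε*((ε-1)*d)) ≤ l ^ r := by
      rw [hl, ← Real.exp_nat_mul]
      apply Real.exp_le_exp.mpr
      have : 2 * ε * (r:ℝ) ≤ 2 * ε * ((1-ε)*d/2) := by
        apply mul_le_mul_of_nonneg_left hr (by linarith)
      nlinarith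
    calc Real.exp (ε^2*d/2) * (1 + l)^d
        ≤ Real.exp (ε^2*d/2) * (2^d * Real.exp (-ε*d) * Real.exp (ε^2/2*d)) := by
          apply mul_le_mul_of_nonneg_left hb (Real.exp_pos _).le
      _ = 2^d * Real.exp (ε*((ε-1)*d)) := by
          have hre : Real.exp (ε^2*(d:ℝ)/2) * (2^d * Real.exp (-ε*(d:ℝ)) * Real.exp (ε^2/2*(d:ℝ)))
              = 2^d * (Real.exp (ε^2*(d:ℝ)/2) * Real.exp (-ε*(d:ℝ)) * Real.exp (ε^2/2*(d:ℝ))) := by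
            ring
          rw [hre, ← Real.exp_add, ← Real.exp_add]
          congr 1
          ring
      _ ≤ 2^d * l ^ r := by
          apply mul_le_mul_of_nonneg_left hlrbound (by positivity)
  -- combine
  have := mul_le_mul_of_nonneg_left step1 (Real.exp_pos (ε^2*d/2)).le
  have h5 : l ^ r * (Real.exp (ε^2*d/2) * (∑ k ∈ Finset.range (r+1), (d.choose k : ℝ)))
      ≤ l ^ r * 2^d := by
    calc l ^ r * (Real.exp (ε^2*d/2) * (∑ k ∈ Finset.range (r+1), (d.choose k : ℝ)))
        = Real.exp (ε^2*d/2) * (l ^ r * (∑ k ∈ Finset.range (r+1), (d.choose k : ℝ))) := by ring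
      _ ≤ Real.exp (ε^2*d/2) * (1 + l)^d := by
          apply mul_le_mul_of_nonneg_left step1 (Real.exp_pos _).le
      _ ≤ 2^d * l ^ r := step2
      _ = l ^ r * 2^d := by ring
  exact le_of_mul_le_mul_left h5 hlr

private lemma euclid_inner_eq {d : ℕ} (x y : EuclideanSpace ℝ (Fin d)) :
    ⟪x, y⟫ = ∑ i, x i * y i := by
  rw [PiLp.inner_apply]
  simp only [RCLike.inner_apply, conj_trivial]
  exact Finset.sum_congr rfl fun _ _ => mul_comm _ _

/-- There is a universal constant `c > 0` such that for every `d ≥ 2` and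
`0 < ε < 1` there exist `m ≥ (1/2)·exp(c·d·ε²)` unit vectors in `R^d` with pairwise
inner products at most `ε`; i.e. spherical codes of exponential size exist. -/
theorem spherical_code_exponential_lower_bound :
    ∃ c : ℝ, 0 < c ∧
      ∀ (d : ℕ), 2 ≤ d → ∀ ε : ℝ, 0 < ε → ε < 1 →
        ∃ (m : ℕ) (w : Fin m → EuclideanSpace ℝ (Fin d)),
          (1 / 2 : ℝ) * Real.exp (c * (d : ℝ) * ε ^ 2) ≤ (m : ℝ) ∧
          (∀ i, ‖w i‖ = 1) ∧
          (∀ i j, i ≠ j → ⟪w i, w j⟫ ≤ ε) := by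
  classical
  refine ⟨1/2, by norm_num, ?_⟩
  intro d hd ε hε0 hε1
  have hd0 : (0:ℝ) < d := by
    have : (2:ℝ) ≤ d := by exact_mod_cast hd
    linarith
  have hv0 : 0 < (1-ε)*(d:ℝ)/2 := by
    have : 0 < 1 - ε := by linarith
    positivity
  set D := ⌈(1-ε)*(d:ℝ)/2⌉₊ with hDdef
  have hD1 : 1 ≤ D := Nat.one_le_ceil_iff.mpr hv0
  set r := D - 1 with hrdef
  have hrv : (r:ℝ) ≤ (1-ε)*(d:ℝ)/2 := by
    have h1 : (D:ℝ) < (1-ε)*(d:ℝ)/2 + 1 := Nat.ceil_lt_add_one hv0.le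
    have h2 : (r:ℝ) = (D:ℝ) - 1 := by
      rw [hrdef, Nat.cast_sub hD1, Nat.cast_one]
    linarith
  have hvd : (1-ε)*(d:ℝ)/2 ≤ (d:ℝ) := by nlinarith
  have hrd : r ≤ d := by
    have : D ≤ d := Nat.ceil_le.mpr hvd
    omega
  obtain ⟨C, hC, hcount⟩ := exists_code d D hD1
  have hrD : r + 1 = D := by omega
  have hcher := chernoff d r ε hε0 hε1 hrv hrd
  rw [hrD] at hcher
  -- B bounds
  have hB1 : 1 ≤ ∑ k ∈ Finset.range D, d.choose k := by
    have := Finset.single_le_sum (f := fun k => d.choose k)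
      (fun i _ => Nat.zero_le _) (Finset.mem_range.mpr hD1)
    simpa using this
  have hBpos : (0:ℝ) < ∑ k ∈ Finset.range D, (d.choose k : ℝ) := by
    have : (1:ℝ) ≤ ∑ k ∈ Finset.range D, (d.choose k : ℝ) := by
      exact_mod_cast hB1
    linarith
  have hcountR : (2:ℝ)^d ≤ (C.card : ℝ) * ∑ k ∈ Finset.range D, (d.choose k : ℝ) := by
    exact_mod_cast hcount
  have hm : Real.exp (ε^2*(d:ℝ)/2) ≤ (C.card : ℝ) := by
    have h := hcher.trans hcountR
    exact le_of_mul_le_mul_right h hBpos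
  -- the vectors
  set e : Fin C.card ≃ {x // x ∈ C} := C.equivFin.symm with hedef
  have hd0' : (0:ℝ) ≤ d := hd0.le
  have hss : Real.sqrt d * Real.sqrt d = (d:ℝ) := Real.mul_self_sqrt hd0'
  have hs0 : (0:ℝ) < Real.sqrt d := Real.sqrt_pos.mpr hd0
  refine ⟨C.card, fun i => (WithLp.toLp 2 fun j => (if (e i).1 j then (1:ℝ) else -1) / Real.sqrt d :
      EuclideanSpace ℝ (Fin d)), ?_, ?_, ?_⟩
  · calc (1/2:ℝ) * Real.exp (1/2 * (d:ℝ) * ε^2)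
        ≤ 1 * Real.exp (1/2 * (d:ℝ) * ε^2) := by
          apply mul_le_mul_of_nonneg_right (by norm_num) (Real.exp_pos _).le
      _ = Real.exp (ε^2*(d:ℝ)/2) := by rw [one_mul]; congr 1; ring
      _ ≤ (C.card : ℝ) := hm
  · intro i
    rw [EuclideanSpace.norm_eq]
    have hterm : ∀ j : Fin d,
        ‖(if (e i).1 j then (1:ℝ) else -1) / Real.sqrt d‖^2 = 1/(d:ℝ) := by
      intro j
      rw [Real.norm_eq_abs, sq_abs, div_pow,
        show ((Real.sqrt d)^2 = (d:ℝ)) from by rw [sq]; exact hss]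
      have hif : ((if (e i).1 j then (1:ℝ) else -1))^2 = 1 := by split <;> norm_num
      rw [hif]
    have : ∑ j : Fin d, ‖(if (e i).1 j then (1:ℝ) else -1) / Real.sqrt d‖^2 = 1 := by
      rw [Finset.sum_congr rfl fun j _ => hterm j]
      rw [Finset.sum_const, Finset.card_univ, Fintype.card_fin, nsmul_eq_mul]
      field_simp
    rw [this, Real.sqrt_one]
  · intro i j hij
    set x := (e i).1 with hx
    set y := (e j).1 with hy
    have hxy : x ≠ y := by
      intro h
      exact hij (e.injective (Subtype.coe_injective h))
    have hk : D ≤ hdist x y := hC x (e i).2 y (e j).2 hxy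
    have hkR : (1-ε)*(d:ℝ)/2 ≤ (hdist x y : ℝ) := by
      calc (1-ε)*(d:ℝ)/2 ≤ (D:ℝ) := Nat.le_ceil _
        _ ≤ (hdist x y : ℝ) := by exact_mod_cast hk
    have hkd : hdist x y ≤ d := by
      have := Finset.card_filter_le (Finset.univ : Finset (Fin d)) (fun i => x i ≠ y i)
      simpa [hdist] using this
    rw [euclid_inner_eq]
    show ∑ a : Fin d, ((if x a then (1:ℝ) else -1) / Real.sqrt d) *
        ((if y a then (1:ℝ) else -1) / Real.sqrt d) ≤ ε
    have hterm : ∀ a : Fin d,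
        ((if x a then (1:ℝ) else -1) / Real.sqrt d) * ((if y a then (1:ℝ) else -1) / Real.sqrt d)
          = if x a = y a then 1/(d:ℝ) else -(1/(d:ℝ)) := by
      intro a
      cases hxa : x a <;> cases hya : y a <;>
        simp only [if_true, if_false] <;>
        rw [div_mul_div_comm, hss] <;> norm_num [neg_div]
    calc ∑ a : Fin d, ((if x a then (1:ℝ) else -1) / Real.sqrt d) *
            ((if y a then (1:ℝ) else -1) / Real.sqrt d)
        = ∑ a : Fin d, (if x a = y a then 1/(d:ℝ) else -(1/(d:ℝ))) :=
          Finset.sum_congr rfl fun a _ => hterm a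
      _ = ((Finset.univ.filter fun a => x a = y a).card : ℝ) * (1/(d:ℝ))
          + ((Finset.univ.filter fun a => ¬ (x a = y a)).card : ℝ) * (-(1/(d:ℝ))) := by
          rw [Finset.sum_ite, Finset.sum_const, Finset.sum_const, nsmul_eq_mul, nsmul_eq_mul]
      _ ≤ ε := by
          have hcards : (Finset.univ.filter fun a => x a = y a).card
              + (Finset.univ.filter fun a => ¬ (x a = y a)).card = d := by
            rw [Finset.card_filter_add_card_filter_not, Finset.card_univ,
              Fintype.card_fin]
          have hne : (Finset.univ.filter fun a => ¬ (x a = y a)).card = hdist x y := rfl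
          rw [hne] at hcards
          have hagree : ((Finset.univ.filter fun a => x a = y a).card : ℝ)
              = (d:ℝ) - (hdist x y : ℝ) := by
            have : (Finset.univ.filter fun a => x a = y a).card = d - hdist x y := by omega
            rw [this, Nat.cast_sub hkd]
          rw [hagree, hne]
          have hinv : (d:ℝ) * (1/(d:ℝ)) = 1 := by field_simp
          nlinarith [hkR, hd0, hinv]
end

section
/- Let f : R → R be M-Lipschitz, β-smooth (f' is β-Lipschitz), twice differentiable, and strictly increasing, let α > 0, and fix x ∈ R^d, y ∈ {+1,−1}. Then g(w) = f(−y⟨w,x⟩ + α‖w‖) is twice differentiable at every w ≠ 0, and its Hessian there satisfies ∇²g(w) ⪯ β'·I with β' = αM/‖w‖ + β(‖x‖ + α)²; that is, for every direction v ∈ R^d, ⟨∇²g(w)v, v⟩ ≤ (αM/‖w‖ + β(‖x‖+α)²)·‖v‖². -/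
open scoped RealInnerProductSpace

open Filter Topology

/-!
Write `g = f ∘ φ` with `φ u = -y⟪u, x⟫ + α‖u‖`. By the second-order chain rule
`∇²g(w) = f'(φ w) ∇²φ(w) + f''(φ w) ∇φ(w) ∇φ(w)ᵀ`, and `∇²φ(w) = α (I - ŵŵᵀ) / ‖w‖` is the
Hessian of `α‖·‖`, positive semidefinite with norm `α / ‖w‖`. The Lipschitz hypotheses give
`|f'| ≤ M` and `|f''| ≤ β`, and Cauchy–Schwarz gives `|∇φ(w) v| ≤ (‖x‖ + α)‖v‖`.
-/

theorem abs_deriv_le_of_abs_sub_le {f : ℝ → ℝ} {M : ℝ} (h : ∀ a b, |f a - f b| ≤ M * |a - b|)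
    (t : ℝ) : |deriv f t| ≤ M := by
  have hM : 0 ≤ M := nonneg_of_mul_nonneg_left (by simpa using (abs_nonneg _).trans (h 1 0))
    zero_lt_one
  lift M to NNReal using hM
  have hf : LipschitzWith M f :=
    LipschitzWith.of_dist_le_mul fun a b => by simpa only [Real.dist_eq] using h a b
  simpa only [Real.norm_eq_abs] using norm_deriv_le_of_lipschitz (x₀ := t) hf

section NormCalculus

variable {E : Type*} [NormedAddCommGroup E] [InnerProductSpace ℝ E] {w : E}

/-- `innerSL ℝ` retyped as a bilinear map, so that it can be added to other elements of
`E →L[ℝ] E →L[ℝ] ℝ`. -/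
noncomputable def realInnerSL : E →L[ℝ] E →L[ℝ] ℝ := innerSL ℝ

@[simp] theorem realInnerSL_apply (u v : E) : realInnerSL u v = ⟪u, v⟫ := rfl

theorem hasFDerivAt_norm_of_ne_zero (hw : w ≠ 0) :
    HasFDerivAt (‖·‖) (‖w‖⁻¹ • realInnerSL w) w := by
  have h := (hasStrictFDerivAt_norm_sq w).hasFDerivAt.sqrt (by positivity)
  simp only [Real.sqrt_sq (norm_nonneg _)] at h
  convert h using 1
  rw [two_smul, ← two_smul ℝ, smul_smul]
  congr 1
  field_simp

noncomputable def normHessian (w : E) : E →L[ℝ] E →L[ℝ] ℝ :=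
  ‖w‖⁻¹ • realInnerSL - (‖w‖ ^ 3)⁻¹ • (realInnerSL w).smulRight (realInnerSL w)

theorem normHessian_apply_self (w v : E) :
    normHessian w v v = ‖w‖⁻¹ * ‖v‖ ^ 2 - (‖w‖ ^ 3)⁻¹ * ⟪w, v⟫ ^ 2 := by
  simp [normHessian, sq]

theorem hasFDerivAt_inv_norm_smul_realInnerSL (hw : w ≠ 0) :
    HasFDerivAt (fun u : E => ‖u‖⁻¹ • realInnerSL u) (normHessian w) w := by
  have hinv := (hasDerivAt_inv (norm_ne_zero_iff.mpr hw)).comp_hasFDerivAt w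
    (hasFDerivAt_norm_of_ne_zero hw)
  refine (hinv.smul realInnerSL.hasFDerivAt).congr_fderiv ?_
  ext u v
  simp [normHessian]
  ring

theorem normHessian_apply_self_nonneg (w v : E) : 0 ≤ normHessian w v v := by
  rcases eq_or_ne w 0 with rfl | hw
  · simp [normHessian]
  have hcs : ⟪w, v⟫ ^ 2 ≤ ‖w‖ ^ 2 * ‖v‖ ^ 2 := by
    simpa only [sq_abs, mul_pow] using
      pow_le_pow_left₀ (abs_nonneg _) (abs_real_inner_le_norm w v) 2
  rw [normHessian_apply_self, sub_nonneg]
  calc (‖w‖ ^ 3)⁻¹ * ⟪w, v⟫ ^ 2 ≤ (‖w‖ ^ 3)⁻¹ * (‖w‖ ^ 2 * ‖v‖ ^ 2) := by gcongr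
    _ = ‖w‖⁻¹ * ‖v‖ ^ 2 := by field_simp

theorem normHessian_apply_self_le (w v : E) : normHessian w v v ≤ ‖v‖ ^ 2 / ‖w‖ := by
  rw [normHessian_apply_self, div_eq_inv_mul]
  have hproj : 0 ≤ (‖w‖ ^ 3)⁻¹ * ⟪w, v⟫ ^ 2 := by positivity
  linarith

end NormCalculus

section SecondOrderChainRule

variable {E : Type*} [NormedAddCommGroup E] [NormedSpace ℝ E]

theorem hasFDerivAt_fderiv_comp_of_real {f : ℝ → ℝ} {φ : E → ℝ} {φ' : E → E →L[ℝ] ℝ}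
    {φ'' : E →L[ℝ] E →L[ℝ] ℝ} {w : E} (hf : Differentiable ℝ f)
    (hf' : DifferentiableAt ℝ (deriv f) (φ w)) (hφ : ∀ᶠ u in 𝓝 w, HasFDerivAt φ (φ' u) u)
    (hφ' : HasFDerivAt φ' φ'' w) :
    HasFDerivAt (fderiv ℝ fun u => f (φ u))
      (deriv f (φ w) • φ'' + (deriv (deriv f) (φ w) • φ' w).smulRight (φ' w)) w := by
  have hfderiv : (fun u => deriv f (φ u) • φ' u) =ᶠ[𝓝 w] fderiv ℝ fun u => f (φ u) :=
    hφ.mono fun u hu => ((hf _).hasDerivAt.comp_hasFDerivAt u hu).fderiv.symm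
  exact ((hf'.hasDerivAt.comp_hasFDerivAt w hφ.self_of_nhds).smul hφ').congr_of_eventuallyEq
    hfderiv.symm

theorem smul_add_smulRight_apply_self_le {a b M β c L : ℝ} {Q : E →L[ℝ] E →L[ℝ] ℝ}
    {ℓ : E →L[ℝ] ℝ} {v : E} (ha : |a| ≤ M) (hb : |b| ≤ β) (hQ₀ : 0 ≤ Q v v) (hQ : Q v v ≤ c)
    (hℓ : |ℓ v| ≤ L) :
    (a • Q + (b • ℓ).smulRight ℓ) v v ≤ M * c + β * L ^ 2 := by
  have hℓ2 : ℓ v ^ 2 ≤ L ^ 2 := sq_le_sq' (neg_le_of_abs_le hℓ) (le_of_abs_le hℓ)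
  have h1 : a * Q v v ≤ M * c :=
    (mul_le_mul_of_nonneg_right (le_of_abs_le ha) hQ₀).trans
      (mul_le_mul_of_nonneg_left hQ ((abs_nonneg a).trans ha))
  have h2 : b * ℓ v ^ 2 ≤ β * L ^ 2 :=
    (mul_le_mul_of_nonneg_right (le_of_abs_le hb) (sq_nonneg _)).trans
      (mul_le_mul_of_nonneg_left hℓ2 ((abs_nonneg b).trans hb))
  simp only [add_apply, smul_apply, ContinuousLinearMap.smulRight_apply, smul_eq_mul]
  nlinarith

end SecondOrderChainRule

section RobustMargin

variable {E : Type*} [NormedAddCommGroup E] [InnerProductSpace ℝ E] (α y : ℝ) (x : E)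

noncomputable def robustMarginDeriv (u : E) : E →L[ℝ] ℝ :=
  -y • realInnerSL x + α • (‖u‖⁻¹ • realInnerSL u)

variable {α y x}

theorem hasFDerivAt_robustMargin {u : E} (hu : u ≠ 0) :
    HasFDerivAt (fun u : E => -y * ⟪u, x⟫ + α * ‖u‖) (robustMarginDeriv α y x u) u := by
  have hinner : HasFDerivAt (fun u : E => ⟪u, x⟫) (realInnerSL x) u := by
    rw [show (fun u : E => ⟪u, x⟫) = realInnerSL x from funext (real_inner_comm x)]
    exact (realInnerSL x).hasFDerivAt
  exact (hinner.const_mul (-y)).add ((hasFDerivAt_norm_of_ne_zero hu).const_mul α)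

theorem hasFDerivAt_robustMarginDeriv {w : E} (hw : w ≠ 0) :
    HasFDerivAt (robustMarginDeriv α y x) (α • normHessian w) w :=
  ((hasFDerivAt_inv_norm_smul_realInnerSL hw).const_smul α).const_add _

theorem abs_robustMarginDeriv_apply_le (w v : E) :
    |robustMarginDeriv α y x w v| ≤ (|y| * ‖x‖ + |α|) * ‖v‖ := by
  have hx : |y * ⟪x, v⟫| ≤ |y| * ‖x‖ * ‖v‖ := by
    rw [abs_mul, mul_assoc]
    exact mul_le_mul_of_nonneg_left (abs_real_inner_le_norm x v) (abs_nonneg y)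
  have hw : |α * (‖w‖⁻¹ * ⟪w, v⟫)| ≤ |α| * ‖v‖ := by
    rw [abs_mul]
    refine mul_le_mul_of_nonneg_left ?_ (abs_nonneg α)
    rcases eq_or_ne w 0 with rfl | hw
    · simp
    rw [abs_mul, abs_inv, abs_norm, inv_mul_le_iff₀ (norm_pos_iff.mpr hw)]
    exact abs_real_inner_le_norm w v
  simp only [robustMarginDeriv, add_apply, smul_apply, realInnerSL_apply, smul_eq_mul, neg_mul]
  calc _ ≤ |y * ⟪x, v⟫| + |α * (‖w‖⁻¹ * ⟪w, v⟫)| := (abs_add_le _ _).trans (by rw [abs_neg])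
    _ ≤ _ := by linarith

end RobustMargin

theorem robust_loss_hessian_bound_general
    (d : ℕ) (f : ℝ → ℝ) (M β : ℝ)
    (hLip : ∀ a b : ℝ, |f a - f b| ≤ M * |a - b|)
    (hSmooth : ∀ a b : ℝ, |deriv f a - deriv f b| ≤ β * |a - b|)
    (hdiff : Differentiable ℝ f) (hdiff2 : Differentiable ℝ (deriv f))
    (α : ℝ) (hα : 0 < α) (x : EuclideanSpace ℝ (Fin d)) (y : ℝ) (hy : y = 1 ∨ y = -1)
    (w : EuclideanSpace ℝ (Fin d)) (hw : w ≠ 0) :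
    (∀ᶠ u in nhds w, DifferentiableAt ℝ
        (fun u : EuclideanSpace ℝ (Fin d) => f (-y * ⟪u, x⟫ + α * ‖u‖)) u) ∧
    ∃ H : EuclideanSpace ℝ (Fin d) →L[ℝ] (EuclideanSpace ℝ (Fin d) →L[ℝ] ℝ),
      HasFDerivAt (fderiv ℝ (fun u : EuclideanSpace ℝ (Fin d) => f (-y * ⟪u, x⟫ + α * ‖u‖))) H w ∧
      ∀ v : EuclideanSpace ℝ (Fin d),
        H v v ≤ (α * M / ‖w‖ + β * (‖x‖ + α) ^ 2) * ‖v‖ ^ 2 := by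
  have hmargin : ∀ᶠ u in 𝓝 w, HasFDerivAt (fun u => -y * ⟪u, x⟫ + α * ‖u‖)
      (robustMarginDeriv α y x u) u :=
    (eventually_ne_nhds hw).mono fun u hu => hasFDerivAt_robustMargin hu
  refine ⟨hmargin.mono fun u hu => (hdiff _).comp u hu.differentiableAt, _,
    hasFDerivAt_fderiv_comp_of_real hdiff (hdiff2 _) hmargin (hasFDerivAt_robustMarginDeriv hw),
    fun v => ?_⟩
  have hy : |y| = 1 := by rcases hy with rfl | rfl <;> simp
  have hgrad : |robustMarginDeriv α y x w v| ≤ (‖x‖ + α) * ‖v‖ :=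
    (abs_robustMarginDeriv_apply_le w v).trans_eq (by rw [hy, one_mul, abs_of_pos hα])
  calc _ ≤ M * (α * (‖v‖ ^ 2 / ‖w‖)) + β * ((‖x‖ + α) * ‖v‖) ^ 2 :=
        smul_add_smulRight_apply_self_le (abs_deriv_le_of_abs_sub_le hLip _)
          (abs_deriv_le_of_abs_sub_le hSmooth _)
          (mul_nonneg hα.le (normHessian_apply_self_nonneg w v))
          (mul_le_mul_of_nonneg_left (normHessian_apply_self_le w v) hα.le)
          hgrad
    _ = _ := by ring

/-- For `f` `M`-Lipschitz, `β`-smooth, twice differentiable and strictly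
increasing, and `α > 0`, the robust loss `g(w) = f(−y⟪w,x⟫ + α‖w‖)` is twice
differentiable at every `w ≠ 0`, with Hessian bounded by
`β' = αM/‖w‖ + β(‖x‖+α)²` in the sense that `⟪∇²g(w)v, v⟫ ≤ β'‖v‖²` for all `v`. -/
theorem robust_loss_hessian_bound
    (d : ℕ) (f : ℝ → ℝ) (M β : ℝ)
    (hLip : ∀ a b : ℝ, |f a - f b| ≤ M * |a - b|)
    (hSmooth : ∀ a b : ℝ, |deriv f a - deriv f b| ≤ β * |a - b|)
    (hdiff : Differentiable ℝ f) (hdiff2 : Differentiable ℝ (deriv f))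
    (hmono : StrictMono f)
    (α : ℝ) (hα : 0 < α) (x : EuclideanSpace ℝ (Fin d)) (y : ℝ) (hy : y = 1 ∨ y = -1)
    (w : EuclideanSpace ℝ (Fin d)) (hw : w ≠ 0) :
    (∀ᶠ u in nhds w, DifferentiableAt ℝ
        (fun u : EuclideanSpace ℝ (Fin d) => f (-y * ⟪u, x⟫ + α * ‖u‖)) u) ∧
    ∃ H : EuclideanSpace ℝ (Fin d) →L[ℝ] (EuclideanSpace ℝ (Fin d) →L[ℝ] ℝ),
      HasFDerivAt (fderiv ℝ (fun u : EuclideanSpace ℝ (Fin d) => f (-y * ⟪u, x⟫ + α * ‖u‖))) H w ∧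
      ∀ v : EuclideanSpace ℝ (Fin d),
        H v v ≤ (α * M / ‖w‖ + β * (‖x‖ + α) ^ 2) * ‖v‖ ^ 2 :=
  robust_loss_hessian_bound_general d f M β hLip hSmooth hdiff hdiff2 α hα x y hy w hw
end

section
/- Let S = {(x_i, y_i)}_{i=1}^n ⊂ R^d × {+1,−1} with ‖x_i‖ ≤ 1 for all i, suppose a unit vector w* satisfies y_i⟨w*, x_i⟩ ≥ γ for all i, and let 0 ≤ α < γ. Consider the α-Perceptron: w₀ = 0, and at each step t an arbitrary index i_t ∈ {1,…,n} is chosen; if y_{i_t}⟨w_t, x_{i_t}⟩ − α‖w_t‖ ≤ 0 then w_{t+1} = w_t + y_{i_t}x_{i_t} − α·w̄_t (where w̄_t = w_t/‖w_t‖ if w_t ≠ 0, else 0), otherwise w_{t+1} = w_t. Then the number of steps at which a non-zero update occurs is at most ((1+α)/(γ−α))², and whenever w_t satisfies y_i⟨w_t, x_i⟩ − α‖w_t‖ > 0 for all i, w_t has margin greater than α on S: min_i y_i⟨w_t, x_i⟩/‖w_t‖ > α. -/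
open scoped RealInnerProductSpace

set_option maxHeartbeats 1000000 in
open scoped Classical in
/-- the `α`-Perceptron on data `‖x_i‖ ≤ 1` which is separable with margin
`γ > α ≥ 0` makes at most `((1+α)/(γ−α))²` non-zero updates, and whenever
`y_i⟪w_t,x_i⟫ − α‖w_t‖ > 0` for all `i`, the iterate `w_t` has margin greater than `α`. -/
theorem alpha_perceptron_mistake_bound
    (d n : ℕ) (x : Fin n → EuclideanSpace ℝ (Fin d)) (y : Fin n → ℝ)
    (hx : ∀ i, ‖x i‖ ≤ 1) (hy : ∀ i, y i = 1 ∨ y i = -1)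
    (wstar : EuclideanSpace ℝ (Fin d)) (hwstar : ‖wstar‖ = 1)
    (γ α : ℝ) (hmargin : ∀ i, γ ≤ y i * ⟪wstar, x i⟫) (hα0 : 0 ≤ α) (hαγ : α < γ)
    (idx : ℕ → Fin n) (w : ℕ → EuclideanSpace ℝ (Fin d)) (hw0 : w 0 = 0)
    (hupd : ∀ t : ℕ, w (t + 1) =
      if y (idx t) * ⟪w t, x (idx t)⟫ - α * ‖w t‖ ≤ 0 then
        w t + y (idx t) • x (idx t) - α • (‖w t‖⁻¹ • w t)
      else w t) :
    (∀ T : ℕ,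
      (((Finset.range T).filter
          (fun t => y (idx t) * ⟪w t, x (idx t)⟫ - α * ‖w t‖ ≤ 0)).card : ℝ) ≤
        ((1 + α) / (γ - α)) ^ 2) ∧
    ∀ t : ℕ, (∀ i, 0 < y i * ⟪w t, x i⟫ - α * ‖w t‖) →
      ∀ i, α < y i * ⟪w t, x i⟫ / ‖w t‖ := by
  have hγα : (0:ℝ) < γ - α := by linarith
  have h1α : (0:ℝ) ≤ 1 + α := by linarith
  constructor
  · intro T
    set P : ℕ → Prop := fun t => y (idx t) * ⟪w t, x (idx t)⟫ - α * ‖w t‖ ≤ 0 with hP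
    have key : ∀ T : ℕ,
        (γ - α) * (((Finset.range T).filter P).card : ℝ) ≤ ⟪wstar, w T⟫ ∧
        ‖w T‖ ^ 2 ≤ (1 + α) ^ 2 * (((Finset.range T).filter P).card : ℝ) := by
      intro T
      induction T with
      | zero => simp [hw0]
      | succ T ih =>
        obtain ⟨ihA, ihB⟩ := ih
        have hfrac : ‖w T‖⁻¹ * ‖w T‖ ≤ 1 := by
          rcases eq_or_ne ‖w T‖ 0 with h | h
          · simp [h]
          · rw [inv_mul_cancel₀ h]
        by_cases hm : P T
        · have hcard : (((Finset.range (T+1)).filter P).card : ℝ)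
              = (((Finset.range T).filter P).card : ℝ) + 1 := by
            rw [Finset.range_add_one, Finset.filter_insert, if_pos hm,
              Finset.card_insert_of_notMem (by simp)]
            push_cast; ring
          set u := y (idx T) • x (idx T) - α • (‖w T‖⁻¹ • w T) with hu
          have hwT1 : w (T+1) = w T + u := by
            rw [hupd T, if_pos hm, hu, add_sub_assoc]
          -- inner with wstar
          have hiu : ⟪wstar, u⟫ = y (idx T) * ⟪wstar, x (idx T)⟫
              - α * (‖w T‖⁻¹ * ⟪wstar, w T⟫) := by
            rw [hu, inner_sub_right, real_inner_smul_right, real_inner_smul_right,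
              real_inner_smul_right]
          have hcs : ⟪wstar, w T⟫ ≤ ‖w T‖ := by
            have := real_inner_le_norm wstar (w T)
            rwa [hwstar, one_mul] at this
          have hcs2 : ‖w T‖⁻¹ * ⟪wstar, w T⟫ ≤ 1 := by
            rcases eq_or_ne ‖w T‖ 0 with h | h
            · have : w T = 0 := by rwa [norm_eq_zero] at h
              simp [this]
            · have hpos : 0 < ‖w T‖ := lt_of_le_of_ne (norm_nonneg _) (Ne.symm h)
              calc ‖w T‖⁻¹ * ⟪wstar, w T⟫ ≤ ‖w T‖⁻¹ * ‖w T‖ := by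
                    exact mul_le_mul_of_nonneg_left hcs (by positivity)
                _ ≤ 1 := hfrac
          have hA : γ - α ≤ ⟪wstar, u⟫ := by
            have h1 := hmargin (idx T)
            rw [hiu]
            nlinarith
          -- inner with w T
          have hiw : ⟪w T, u⟫ = y (idx T) * ⟪w T, x (idx T)⟫ - α * ‖w T‖ := by
            have hself : ‖w T‖⁻¹ * ⟪w T, w T⟫ = ‖w T‖ := by
              rw [real_inner_self_eq_norm_mul_norm]
              rcases eq_or_ne ‖w T‖ 0 with h | h
              · simp [h]
              · field_simp
            rw [hu, inner_sub_right, real_inner_smul_right, real_inner_smul_right,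
              real_inner_smul_right, hself]
          have hmist : ⟪w T, u⟫ ≤ 0 := by rw [hiw]; exact hm
          -- norm of u
          have hnu : ‖u‖ ≤ 1 + α := by
            have h1 : ‖y (idx T) • x (idx T)‖ ≤ 1 := by
              rw [norm_smul]
              have : |y (idx T)| = 1 := by rcases hy (idx T) with h | h <;> simp [h]
              rw [Real.norm_eq_abs, this, one_mul]
              exact hx _
            have h2 : ‖α • (‖w T‖⁻¹ • w T)‖ ≤ α := by
              rw [norm_smul, norm_smul, Real.norm_eq_abs, Real.norm_eq_abs,
                abs_of_nonneg hα0, abs_of_nonneg (by positivity : (0:ℝ) ≤ ‖w T‖⁻¹)]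
              nlinarith
            calc ‖u‖ ≤ ‖y (idx T) • x (idx T)‖ + ‖α • (‖w T‖⁻¹ • w T)‖ := norm_sub_le _ _
              _ ≤ 1 + α := add_le_add h1 h2
          constructor
          · rw [hcard, hwT1, inner_add_right]
            nlinarith
          · rw [hcard, hwT1, norm_add_sq_real]
            nlinarith [sq_nonneg (1 + α), norm_nonneg u, sq_abs (‖u‖)]
        · have hcard : ((Finset.range (T+1)).filter P).card
              = ((Finset.range T).filter P).card := by
            rw [Finset.range_add_one, Finset.filter_insert, if_neg hm]
          have hwT1 : w (T+1) = w T := by rw [hupd T, if_neg hm]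
          rw [hcard, hwT1]
          exact ⟨ihA, ihB⟩
    obtain ⟨hA, hB⟩ := key T
    set M : ℝ := (((Finset.range T).filter P).card : ℝ) with hM
    have hM0 : 0 ≤ M := by positivity
    have hcs : ⟪wstar, w T⟫ ≤ ‖w T‖ := by
      have := real_inner_le_norm wstar (w T)
      rwa [hwstar, one_mul] at this
    have hsq : ((γ - α) * M) ^ 2 ≤ (1 + α) ^ 2 * M := by
      have h1 : (γ - α) * M ≤ ‖w T‖ := le_trans hA hcs
      nlinarith [mul_nonneg (le_of_lt hγα) hM0, norm_nonneg (w T)]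
    rcases eq_or_lt_of_le hM0 with h | h
    · rw [← h]; positivity
    · rw [div_pow, le_div_iff₀ (by positivity)]
      have : (γ - α) ^ 2 * M ^ 2 ≤ (1 + α) ^ 2 * M := by nlinarith
      nlinarith
  · intro t ht i
    have h := ht i
    have hw : 0 < ‖w t‖ := by
      rcases eq_or_lt_of_le (norm_nonneg (w t)) with h0 | h0
      · exfalso
        have hz : w t = 0 := by rwa [eq_comm, norm_eq_zero] at h0
        rw [hz] at h
        simp at h
      · exact h0
    rw [lt_div_iff₀ hw]
    linarith
end

section
/- Let f(u) = ln(1+exp(u)), let S = {(x_i,y_i)}_{i=1}^n ⊂ R^d × {±1} with ‖x_i‖ ≤ 1, suppose a unit vector w* satisfies y_i⟨w*,x_i⟩ ≥ γ for all i with γ ≤ 1, and let 0 ≤ α < γ. Let {w_t} be the α-GD iterates with w₀ = 0, η₀ = 1, and step sizes satisfying η_t ≤ (2α/(γ−α) + (1+α)²)^{−1} for all t ≥ 1. Then for every t ≥ 2: L_rob(w_t) ≤ 1/t + (1/4 + ln(t)²/(γ−α)²) / (Σ_{j=1}^{t−1} η_j). -/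
open scoped RealInnerProductSpace

noncomputable def sigFn (u : ℝ) : ℝ := Real.exp u / (1 + Real.exp u)


lemma one_add_exp_pos (u : ℝ) : 0 < 1 + Real.exp u := by positivity

lemma sigFn_nonneg (u : ℝ) : 0 ≤ sigFn u := by
  unfold sigFn; positivity

lemma sigFn_le_one (u : ℝ) : sigFn u ≤ 1 := by
  unfold sigFn
  rw [div_le_one (one_add_exp_pos u)]; linarith

lemma hasDerivAt_logexp (u : ℝ) :
    HasDerivAt (fun u => Real.log (1 + Real.exp u)) (sigFn u) u := by
  have h : HasDerivAt (fun u : ℝ => 1 + Real.exp u) (Real.exp u) u :=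
    (Real.hasDerivAt_exp u).const_add 1
  simpa [sigFn] using h.log (one_add_exp_pos u).ne'

lemma deriv_logexp (u : ℝ) :
    deriv (fun u => Real.log (1 + Real.exp u)) u = sigFn u :=
  (hasDerivAt_logexp u).deriv

lemma sigFn_mono : Monotone sigFn := by
  intro a b hab
  unfold sigFn
  rw [div_le_div_iff₀ (one_add_exp_pos a) (one_add_exp_pos b)]
  have := Real.exp_le_exp.2 hab
  nlinarith [Real.exp_pos a, Real.exp_pos b]

lemma hasDerivAt_sigFn (u : ℝ) :
    HasDerivAt sigFn (Real.exp u / (1 + Real.exp u) ^ 2) u := by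
  have h1 : HasDerivAt (fun u : ℝ => 1 + Real.exp u) (Real.exp u) u :=
    (Real.hasDerivAt_exp u).const_add 1
  have := (Real.hasDerivAt_exp u).div h1 (one_add_exp_pos u).ne'
  refine this.congr_deriv (Eq.symm ?_)
  field_simp
  ring

lemma sigFn_deriv_bound (u : ℝ) : Real.exp u / (1 + Real.exp u) ^ 2 ≤ 1/4 := by
  rw [div_le_iff₀ (by positivity)]
  nlinarith [Real.exp_pos u, sq_nonneg (1 - Real.exp u)]

-- f' is 1/4-Lipschitz
lemma sigFn_lipschitz (a b : ℝ) : |sigFn a - sigFn b| ≤ |a - b| / 4 := by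
  rcases lt_trichotomy a b with h | h | h
  · obtain ⟨c, _, hc⟩ := exists_hasDerivAt_eq_slope sigFn _ h
      (fun u _ => (hasDerivAt_sigFn u).continuousAt.continuousWithinAt)
      (fun u _ => hasDerivAt_sigFn u)
    have hb : sigFn b - sigFn a = (Real.exp c / (1 + Real.exp c) ^ 2) * (b - a) :=
      (div_eq_iff (sub_ne_zero.mpr h.ne')).mp hc.symm
    have h4 := sigFn_deriv_bound c
    have : 0 ≤ Real.exp c / (1 + Real.exp c) ^ 2 := by positivity
    rw [abs_sub_comm, abs_of_nonneg (by nlinarith), abs_sub_comm, abs_of_nonneg (by linarith)]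
    nlinarith
  · simp [h]
  · obtain ⟨c, _, hc⟩ := exists_hasDerivAt_eq_slope sigFn _ h
      (fun u _ => (hasDerivAt_sigFn u).continuousAt.continuousWithinAt)
      (fun u _ => hasDerivAt_sigFn u)
    have hb : sigFn a - sigFn b = (Real.exp c / (1 + Real.exp c) ^ 2) * (a - b) :=
      (div_eq_iff (sub_ne_zero.mpr h.ne')).mp hc.symm
    have h4 := sigFn_deriv_bound c
    have : 0 ≤ Real.exp c / (1 + Real.exp c) ^ 2 := by positivity
    rw [abs_of_nonneg (by nlinarith), abs_of_nonneg (by linarith)]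
    nlinarith

-- subgradient inequality for F(u) = log(1+exp u)
lemma logexp_subgrad (a b : ℝ) :
    sigFn a * (b - a) ≤ Real.log (1 + Real.exp b) - Real.log (1 + Real.exp a) := by
  set F := fun u : ℝ => Real.log (1 + Real.exp u)
  rcases lt_trichotomy a b with h | h | h
  · obtain ⟨c, hcm, hc⟩ := exists_hasDerivAt_eq_slope F sigFn h
      (fun u _ => (hasDerivAt_logexp u).continuousAt.continuousWithinAt)
      (fun u _ => hasDerivAt_logexp u)
    have : F b - F a = sigFn c * (b - a) :=
      (div_eq_iff (sub_ne_zero.mpr h.ne')).mp hc.symm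
    rw [this]
    have := sigFn_mono (le_of_lt hcm.1)
    nlinarith
  · simp [h]
  · obtain ⟨c, hcm, hc⟩ := exists_hasDerivAt_eq_slope F sigFn h
      (fun u _ => (hasDerivAt_logexp u).continuousAt.continuousWithinAt)
      (fun u _ => hasDerivAt_logexp u)
    have h1 : F a - F b = sigFn c * (a - b) :=
      (div_eq_iff (sub_ne_zero.mpr h.ne')).mp hc.symm
    have h2 : F b - F a = sigFn c * (b - a) := by nlinarith [h1]
    rw [h2]
    have := sigFn_mono (le_of_lt hcm.2)
    nlinarith

lemma logexp_mono {a b : ℝ} (h : a ≤ b) :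
    Real.log (1 + Real.exp a) ≤ Real.log (1 + Real.exp b) := by
  apply Real.log_le_log (one_add_exp_pos a)
  linarith [Real.exp_le_exp.2 h]

lemma logexp_nonneg (u : ℝ) : 0 ≤ Real.log (1 + Real.exp u) := by
  apply Real.log_nonneg; linarith [Real.exp_pos u]




-- ‖a/‖a‖ − b/‖b‖‖ ≤ 2‖a−b‖/(‖a‖+‖b‖)
lemma unit_diff_le {E : Type*} [NormedAddCommGroup E] [InnerProductSpace ℝ E]
    {a b : E} (ha : a ≠ 0) (hb : b ≠ 0) :
    ‖(‖a‖⁻¹ • a) - (‖b‖⁻¹ • b)‖ * (‖a‖ + ‖b‖) ≤ 2 * ‖a - b‖ := by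
  have hA : (0:ℝ) < ‖a‖ := norm_pos_iff.mpr ha
  have hB : (0:ℝ) < ‖b‖ := norm_pos_iff.mpr hb
  have hmul : (0:ℝ) < ‖a‖ * ‖b‖ := by positivity
  have key : (‖(‖a‖⁻¹ • a) - (‖b‖⁻¹ • b)‖ * (‖a‖ + ‖b‖))^2 ≤ (2 * ‖a - b‖)^2 := by
    have e1 : ‖(‖a‖⁻¹ • a) - (‖b‖⁻¹ • b)‖^2 = 2 - 2 * (⟪a, b⟫ / (‖a‖ * ‖b‖)) := by
      rw [@norm_sub_sq_real]
      rw [norm_smul, norm_smul, real_inner_smul_left, real_inner_smul_right]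
      simp only [norm_inv, norm_norm]
      field_simp
      ring
    have e2 : ‖a - b‖^2 = ‖a‖^2 + ‖b‖^2 - 2 * ⟪a, b⟫ := by
      rw [@norm_sub_sq_real]; ring
    have hcs2 : -(‖a‖ * ‖b‖) ≤ ⟪a, b⟫ := by
      have := real_inner_le_norm (-a) b
      rw [inner_neg_left, norm_neg] at this
      linarith
    rw [mul_pow, e1, mul_pow, e2]
    have hu : -1 ≤ ⟪a, b⟫ / (‖a‖*‖b‖) := by
      rw [le_div_iff₀ hmul]; linarith
    have ht' : ⟪a, b⟫ = ⟪a, b⟫ / (‖a‖*‖b‖) * (‖a‖*‖b‖) := (div_mul_cancel₀ _ hmul.ne').symm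
    nlinarith [mul_nonneg (by linarith : (0:ℝ) ≤ 1 + ⟪a, b⟫/(‖a‖*‖b‖)) (sq_nonneg (‖a‖-‖b‖))]
  have h2 : (0:ℝ) ≤ 2 * ‖a - b‖ := by positivity
  nlinarith [mul_nonneg (norm_nonneg ((‖a‖⁻¹ • a) - (‖b‖⁻¹ • b))) (by positivity : (0:ℝ) ≤ ‖a‖+‖b‖)]

lemma norm_line_sq {E : Type*} [NormedAddCommGroup E] [InnerProductSpace ℝ E]
    (w Δ : E) (r : ℝ) : ‖w + r • Δ‖^2 = ‖w‖^2 + 2*r*⟪w, Δ⟫ + r^2*‖Δ‖^2 := by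
  rw [@norm_add_sq_real, real_inner_smul_right, norm_smul]
  simp only [mul_pow, sq_abs, norm_norm, Real.norm_eq_abs]
  ring

-- derivative of s ↦ ‖w + s • Δ‖
lemma hasDerivAt_norm_line {E : Type*} [NormedAddCommGroup E] [InnerProductSpace ℝ E]
    (w Δ : E) (s : ℝ) (hns : w + s • Δ ≠ 0) :
    HasDerivAt (fun s : ℝ => ‖w + s • Δ‖) (⟪‖w + s • Δ‖⁻¹ • (w + s • Δ), Δ⟫) s := by
  have hq : ∀ r : ℝ, ‖w + r • Δ‖ = Real.sqrt (‖w‖^2 + 2*r*⟪w, Δ⟫ + r^2*‖Δ‖^2) := fun r => by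
    rw [← norm_line_sq w Δ r, Real.sqrt_sq (norm_nonneg _)]
  have hqpos : (0:ℝ) < ‖w‖^2 + 2*s*⟪w, Δ⟫ + s^2*‖Δ‖^2 := by
    rw [← norm_line_sq w Δ s]
    exact pow_pos (norm_pos_iff.mpr hns) 2
  have hpoly : HasDerivAt (fun r : ℝ => ‖w‖^2 + 2*r*⟪w, Δ⟫ + r^2*‖Δ‖^2)
      (2*⟪w, Δ⟫ + 2*s*‖Δ‖^2) s := by
    have h1 : HasDerivAt (fun r : ℝ => r) 1 s := hasDerivAt_id s
    have ha := ((h1.const_mul (2:ℝ)).mul_const (⟪w, Δ⟫)).const_add (‖w‖^2)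
    have h2 := ((h1.pow 2).mul_const (‖Δ‖^2))
    refine (ha.add h2).congr_deriv (Eq.symm ?_)
    ring
  have hc := (Real.hasDerivAt_sqrt hqpos.ne').comp s hpoly
  have heq : (fun r : ℝ => ‖w + r • Δ‖) =
      (Real.sqrt ∘ fun r : ℝ => ‖w‖^2 + 2*r*⟪w, Δ⟫ + r^2*‖Δ‖^2) := by
    funext r; exact hq r
  rw [heq]
  refine hc.congr_deriv (Eq.symm ?_)
  rw [real_inner_smul_left, hq s]
  have hnn : 0 < Real.sqrt (‖w‖^2 + 2*s*⟪w, Δ⟫ + s^2*‖Δ‖^2) := Real.sqrt_pos.mpr hqpos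
  rw [inner_add_left, real_inner_smul_left, real_inner_self_eq_norm_sq]
  field_simp

section AlphaGD

variable {d n : ℕ} (x : Fin n → EuclideanSpace ℝ (Fin d)) (y : Fin n → ℝ) (α : ℝ)

noncomputable def gdZ (w : EuclideanSpace ℝ (Fin d)) (i : Fin n) : ℝ :=
  -(y i) * ⟪w, x i⟫ + α * ‖w‖

noncomputable def gdV (w : EuclideanSpace ℝ (Fin d)) : EuclideanSpace ℝ (Fin d) :=
  (n:ℝ)⁻¹ • ∑ i, sigFn (gdZ x y α w i) • (-(y i) • x i + α • (‖w‖⁻¹ • w))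

noncomputable def gdL (w : EuclideanSpace ℝ (Fin d)) : ℝ :=
  (n:ℝ)⁻¹ * ∑ i, Real.log (1 + Real.exp (gdZ x y α w i))

lemma gdV_inner (w u : EuclideanSpace ℝ (Fin d)) :
    ⟪gdV x y α w, u⟫ = (n:ℝ)⁻¹ * ∑ i, sigFn (gdZ x y α w i) *
      (-(y i) * ⟪x i, u⟫ + α * ⟪‖w‖⁻¹ • w, u⟫) := by
  simp only [gdV, real_inner_smul_left, sum_inner, inner_add_left, inner_neg_left]


lemma unit_norm_le (w : EuclideanSpace ℝ (Fin d)) : ‖(‖w‖⁻¹ • w)‖ ≤ 1 := by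
  rcases eq_or_ne w 0 with h | h
  · simp [h]
  · rw [norm_smul, norm_inv, norm_norm, inv_mul_cancel₀ (norm_ne_zero_iff.mpr h)]


lemma unit_inner_self {w : EuclideanSpace ℝ (Fin d)} (h : w ≠ 0) :
    ⟪‖w‖⁻¹ • w, w⟫ = ‖w‖ := by
  rw [real_inner_smul_left, real_inner_self_eq_norm_sq]
  field_simp [norm_ne_zero_iff.mpr h]

-- key convexity fact: the robust logit argument is superadditive wrt the subgradient direction
lemma gdZ_subgrad (hα0 : 0 ≤ α) (w u : EuclideanSpace ℝ (Fin d)) (i : Fin n) :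
    gdZ x y α w i + (-(y i) * ⟪x i, u - w⟫ + α * ⟪‖w‖⁻¹ • w, u - w⟫) ≤ gdZ x y α u i := by
  simp only [gdZ]
  have hcomm : ⟪x i, u - w⟫ = ⟪u, x i⟫ - ⟪w, x i⟫ := by
    rw [real_inner_comm, inner_sub_left]
  rw [hcomm]
  have key : ⟪‖w‖⁻¹ • w, u - w⟫ ≤ ‖u‖ - ‖w‖ := by
    rcases eq_or_ne w 0 with h | h
    · simp [h, norm_nonneg]
    · rw [inner_sub_right, unit_inner_self h]
      have := real_inner_le_norm (‖w‖⁻¹ • w) u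
      have h2 := unit_norm_le w
      nlinarith [norm_nonneg u]
  nlinarith

lemma gdL_subgrad (hα0 : 0 ≤ α) (w u : EuclideanSpace ℝ (Fin d)) :
    gdL x y α w + ⟪gdV x y α w, u - w⟫ ≤ gdL x y α u := by
  rw [gdV_inner, gdL, gdL, ← mul_add]
  have hn0 : (0:ℝ) ≤ (n:ℝ)⁻¹ := by positivity
  apply mul_le_mul_of_nonneg_left _ hn0
  rw [← Finset.sum_add_distrib]
  apply Finset.sum_le_sum
  intro i _
  set c := -(y i) * ⟪x i, u - w⟫ + α * ⟪‖w‖⁻¹ • w, u - w⟫ with hc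
  have h1 := logexp_subgrad (gdZ x y α w i) (gdZ x y α w i + c)
  have h2 := logexp_mono (gdZ_subgrad x y α hα0 w u i)
  simp only [add_sub_cancel_left] at h1
  linarith

lemma gdV_inner_wstar {γ : ℝ} (wstar : EuclideanSpace ℝ (Fin d)) (hwstar : ‖wstar‖ = 1)
    (hmargin : ∀ i, γ ≤ y i * ⟪wstar, x i⟫) (hα0 : 0 ≤ α) (hαγ : α ≤ γ)
    (w : EuclideanSpace ℝ (Fin d)) :
    ⟪gdV x y α w, wstar⟫ ≤ 0 := by
  rw [gdV_inner]
  have hn0 : (0:ℝ) ≤ (n:ℝ)⁻¹ := by positivity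
  apply mul_nonpos_of_nonneg_of_nonpos hn0
  apply Finset.sum_nonpos
  intro i _
  apply mul_nonpos_of_nonneg_of_nonpos (sigFn_nonneg _)
  have h1 : γ ≤ y i * ⟪wstar, x i⟫ := hmargin i
  have h3 : ⟪‖w‖⁻¹ • w, wstar⟫ ≤ 1 := by
    have := real_inner_le_norm (‖w‖⁻¹ • w) wstar
    have h4 := unit_norm_le w
    nlinarith [norm_nonneg (‖w‖⁻¹ • w)]
  rw [real_inner_comm wstar (x i)]
  nlinarith [mul_nonneg hα0 (sub_nonneg.mpr h3), h1]

set_option maxHeartbeats 2000000 in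
lemma gdL_smooth (hn : 0 < n) (hx : ∀ i, ‖x i‖ ≤ 1) (hy : ∀ i, y i = 1 ∨ y i = -1)
    (hα0 : 0 ≤ α) {c : ℝ} (hc : 0 < c) (w Δ : EuclideanSpace ℝ (Fin d))
    (hseg : ∀ s : ℝ, s ∈ Set.Icc (0:ℝ) 1 → c ≤ ‖w + s • Δ‖) :
    gdL x y α (w + Δ) ≤ gdL x y α w + ⟪gdV x y α w, Δ⟫ +
      (((1+α)^2/4 + α/c)/2) * ‖Δ‖^2 := by
  set K : ℝ := (1+α)^2/4 + α/c with hK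
  set A : Fin n → ℝ := fun i => -(y i) * ⟪w, x i⟫ with hA
  set B : Fin n → ℝ := fun i => -(y i) * ⟪Δ, x i⟫ with hB
  set φ : ℝ → ℝ := fun s => (n:ℝ)⁻¹ *
    ∑ i, Real.log (1 + Real.exp (A i + s * B i + α * ‖w + s • Δ‖)) with hφ
  set D : ℝ → ℝ := fun s => (n:ℝ)⁻¹ * ∑ i, sigFn (A i + s * B i + α * ‖w + s • Δ‖) *
      (B i + α * ⟪‖w + s • Δ‖⁻¹ • (w + s • Δ), Δ⟫) with hD
  have hne : ∀ s : ℝ, s ∈ Set.Icc (0:ℝ) 1 → w + s • Δ ≠ 0 := by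
    intro s hs h0
    have := hseg s hs
    rw [h0, norm_zero] at this
    linarith
  have hyabs : ∀ i, |y i| = 1 := fun i => by rcases hy i with h | h <;> simp [h]
  have h00 : (0:ℝ) ∈ Set.Icc (0:ℝ) 1 := by constructor <;> norm_num
  have h11 : (1:ℝ) ∈ Set.Icc (0:ℝ) 1 := by constructor <;> norm_num
  -- derivative of φ
  have hder : ∀ s : ℝ, s ∈ Set.Icc (0:ℝ) 1 → HasDerivAt φ (D s) s := by
    intro s hs
    have hsum : HasDerivAt
        (fun s : ℝ => ∑ i, Real.log (1 + Real.exp (A i + s * B i + α * ‖w + s • Δ‖)))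
        (∑ i, sigFn (A i + s * B i + α * ‖w + s • Δ‖) *
          (B i + α * ⟪‖w + s • Δ‖⁻¹ • (w + s • Δ), Δ⟫)) s := by
      apply HasDerivAt.fun_sum
      intro i _
      have h1 : HasDerivAt (fun s : ℝ => A i + s * B i + α * ‖w + s • Δ‖)
          (B i + α * ⟪‖w + s • Δ‖⁻¹ • (w + s • Δ), Δ⟫) s := by
        have ha : HasDerivAt (fun s : ℝ => A i + s * B i) (B i) s := by
          simpa using ((hasDerivAt_id s).mul_const (B i)).const_add (A i)
        have hb := (hasDerivAt_norm_line w Δ s (hne s hs)).const_mul α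
        exact ha.add hb
      have h2 := (hasDerivAt_logexp (A i + s * B i + α * ‖w + s • Δ‖)).comp s h1
      exact h2
    exact hsum.const_mul ((n:ℝ)⁻¹)
  -- bounds
  have habs_unit : ∀ s : ℝ, |⟪‖w + s • Δ‖⁻¹ • (w + s • Δ), Δ⟫| ≤ ‖Δ‖ := by
    intro s
    have h1 := abs_real_inner_le_norm (‖w + s • Δ‖⁻¹ • (w + s • Δ)) Δ
    have h2 := unit_norm_le (w + s • Δ)
    nlinarith [norm_nonneg Δ, norm_nonneg (‖w + s • Δ‖⁻¹ • (w + s • Δ))]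
  have hBabs : ∀ i, |B i| ≤ ‖Δ‖ := by
    intro i
    rw [hB]
    simp only [abs_mul, abs_neg, hyabs i, one_mul]
    calc |⟪Δ, x i⟫| ≤ ‖Δ‖ * ‖x i‖ := abs_real_inner_le_norm _ _
      _ ≤ ‖Δ‖ * 1 := by nlinarith [norm_nonneg Δ, hx i]
      _ = ‖Δ‖ := mul_one _
  -- Lipschitz bound on D
  have hlip : ∀ s : ℝ, s ∈ Set.Icc (0:ℝ) 1 → D s - D 0 ≤ K * s * ‖Δ‖^2 := by
    intro s hs
    obtain ⟨hs0, hs1⟩ := hs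
    rw [hD]
    simp only
    rw [← mul_sub, ← Finset.sum_sub_distrib]
    have hper : ∀ i : Fin n,
        sigFn (A i + s * B i + α * ‖w + s • Δ‖) *
          (B i + α * ⟪‖w + s • Δ‖⁻¹ • (w + s • Δ), Δ⟫) -
        sigFn (A i + 0 * B i + α * ‖w + (0:ℝ) • Δ‖) *
          (B i + α * ⟪‖w + (0:ℝ) • Δ‖⁻¹ • (w + (0:ℝ) • Δ), Δ⟫) ≤ K * s * ‖Δ‖^2 := by
      intro i
      set zs := A i + s * B i + α * ‖w + s • Δ‖ with hzs
      set z0 := A i + 0 * B i + α * ‖w + (0:ℝ) • Δ‖ with hz0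
      set ms := B i + α * ⟪‖w + s • Δ‖⁻¹ • (w + s • Δ), Δ⟫ with hms
      set m0 := B i + α * ⟪‖w + (0:ℝ) • Δ‖⁻¹ • (w + (0:ℝ) • Δ), Δ⟫ with hm0
      have hnorm_diff : |‖w + s • Δ‖ - ‖w + (0:ℝ) • Δ‖| ≤ s * ‖Δ‖ := by
        have h1 := abs_norm_sub_norm_le (w + s • Δ) (w + (0:ℝ) • Δ)
        have h2 : (w + s • Δ) - (w + (0:ℝ) • Δ) = s • Δ := by
          rw [zero_smul, add_zero]; abel
        rw [h2, norm_smul, Real.norm_eq_abs, abs_of_nonneg hs0] at h1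
        exact h1
      have hzdiff : |zs - z0| ≤ (1 + α) * s * ‖Δ‖ := by
        rw [hzs, hz0]
        have he : A i + s * B i + α * ‖w + s • Δ‖ - (A i + 0 * B i + α * ‖w + (0:ℝ) • Δ‖)
            = s * B i + α * (‖w + s • Δ‖ - ‖w + (0:ℝ) • Δ‖) := by ring
        rw [he]
        calc |s * B i + α * (‖w + s • Δ‖ - ‖w + (0:ℝ) • Δ‖)|
            ≤ |s * B i| + |α * (‖w + s • Δ‖ - ‖w + (0:ℝ) • Δ‖)| := abs_add_le _ _
          _ ≤ s * ‖Δ‖ + α * (s * ‖Δ‖) := by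
              have b1 : |s * B i| ≤ s * ‖Δ‖ := by
                rw [abs_mul, abs_of_nonneg hs0]
                exact mul_le_mul_of_nonneg_left (hBabs i) hs0
              have b2 : |α * (‖w + s • Δ‖ - ‖w + (0:ℝ) • Δ‖)| ≤ α * (s * ‖Δ‖) := by
                rw [abs_mul, abs_of_nonneg hα0]
                exact mul_le_mul_of_nonneg_left hnorm_diff hα0
              linarith
          _ = (1 + α) * s * ‖Δ‖ := by ring
      have hms_abs : |ms| ≤ (1 + α) * ‖Δ‖ := by
        rw [hms]
        calc |B i + α * ⟪‖w + s • Δ‖⁻¹ • (w + s • Δ), Δ⟫|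
            ≤ |B i| + |α * ⟪‖w + s • Δ‖⁻¹ • (w + s • Δ), Δ⟫| := abs_add_le _ _
          _ ≤ ‖Δ‖ + α * ‖Δ‖ := by
              have b1 := hBabs i
              have b2 : |α * ⟪‖w + s • Δ‖⁻¹ • (w + s • Δ), Δ⟫| ≤ α * ‖Δ‖ := by
                rw [abs_mul, abs_of_nonneg hα0]
                exact mul_le_mul_of_nonneg_left (habs_unit s) hα0
              linarith
          _ = (1 + α) * ‖Δ‖ := by ring
      have hmdiff : |ms - m0| ≤ α / c * s * ‖Δ‖^2 := by
        rw [hms, hm0]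
        have he : B i + α * ⟪‖w + s • Δ‖⁻¹ • (w + s • Δ), Δ⟫ -
            (B i + α * ⟪‖w + (0:ℝ) • Δ‖⁻¹ • (w + (0:ℝ) • Δ), Δ⟫) =
            α * ⟪(‖w + s • Δ‖⁻¹ • (w + s • Δ)) - (‖w + (0:ℝ) • Δ‖⁻¹ • (w + (0:ℝ) • Δ)), Δ⟫ := by
          rw [inner_sub_left]; ring
        rw [he, abs_mul, abs_of_nonneg hα0]
        have hud := unit_diff_le (hne s ⟨hs0, hs1⟩) (hne 0 h00)
        have hs2 : 2 * c ≤ ‖w + s • Δ‖ + ‖w + (0:ℝ) • Δ‖ := by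
          have := hseg s ⟨hs0, hs1⟩
          have := hseg 0 h00
          linarith
        have hsd : ‖(w + s • Δ) - (w + (0:ℝ) • Δ)‖ = s * ‖Δ‖ := by
          have h2 : (w + s • Δ) - (w + (0:ℝ) • Δ) = s • Δ := by
            rw [zero_smul, add_zero]; abel
          rw [h2, norm_smul, Real.norm_eq_abs, abs_of_nonneg hs0]
        rw [hsd] at hud
        have hXnn : (0:ℝ) ≤ ‖(‖w + s • Δ‖⁻¹ • (w + s • Δ)) - (‖w + (0:ℝ) • Δ‖⁻¹ • (w + (0:ℝ) • Δ))‖ :=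
          norm_nonneg _
        have hunit : ‖(‖w + s • Δ‖⁻¹ • (w + s • Δ)) - (‖w + (0:ℝ) • Δ‖⁻¹ • (w + (0:ℝ) • Δ))‖
            ≤ s * ‖Δ‖ / c := by
          rw [le_div_iff₀ hc]
          nlinarith [mul_nonneg hXnn (by linarith : (0:ℝ) ≤ ‖w + s • Δ‖ + ‖w + (0:ℝ) • Δ‖ - 2*c)]
        have hinner := abs_real_inner_le_norm
          ((‖w + s • Δ‖⁻¹ • (w + s • Δ)) - (‖w + (0:ℝ) • Δ‖⁻¹ • (w + (0:ℝ) • Δ))) Δ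
        calc α * |⟪(‖w + s • Δ‖⁻¹ • (w + s • Δ)) - (‖w + (0:ℝ) • Δ‖⁻¹ • (w + (0:ℝ) • Δ)), Δ⟫|
            ≤ α * (s * ‖Δ‖ / c * ‖Δ‖) := by
              apply mul_le_mul_of_nonneg_left _ hα0
              calc |⟪_, Δ⟫| ≤ _ := hinner
                _ ≤ s * ‖Δ‖ / c * ‖Δ‖ := by nlinarith [norm_nonneg Δ]
          _ = α / c * s * ‖Δ‖^2 := by ring
      have hsig_l := sigFn_lipschitz zs z0
      have hsig0 := sigFn_nonneg z0
      have hsig1 := sigFn_le_one z0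
      have g1 : (sigFn zs - sigFn z0) * ms ≤ ((1+α) * s * ‖Δ‖ / 4) * ((1+α) * ‖Δ‖) := by
        calc (sigFn zs - sigFn z0) * ms ≤ |(sigFn zs - sigFn z0) * ms| := le_abs_self _
          _ = |sigFn zs - sigFn z0| * |ms| := abs_mul _ _
          _ ≤ ((1+α) * s * ‖Δ‖ / 4) * ((1+α) * ‖Δ‖) := by
              apply mul_le_mul (by linarith) hms_abs (abs_nonneg _)
              positivity
      have g2 : sigFn z0 * (ms - m0) ≤ α / c * s * ‖Δ‖^2 := by
        calc sigFn z0 * (ms - m0) ≤ |sigFn z0 * (ms - m0)| := le_abs_self _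
          _ = |sigFn z0| * |ms - m0| := abs_mul _ _
          _ ≤ 1 * (α / c * s * ‖Δ‖^2) := by
              apply mul_le_mul _ hmdiff (abs_nonneg _) zero_le_one
              rw [abs_of_nonneg hsig0]; exact hsig1
          _ = α / c * s * ‖Δ‖^2 := one_mul _
      have hdecomp : sigFn zs * ms - sigFn z0 * m0 =
          (sigFn zs - sigFn z0) * ms + sigFn z0 * (ms - m0) := by ring
      rw [hdecomp, hK]
      nlinarith [g1, g2]
    calc (n:ℝ)⁻¹ * ∑ i, (sigFn (A i + s * B i + α * ‖w + s • Δ‖) *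
          (B i + α * ⟪‖w + s • Δ‖⁻¹ • (w + s • Δ), Δ⟫) -
        sigFn (A i + 0 * B i + α * ‖w + (0:ℝ) • Δ‖) *
          (B i + α * ⟪‖w + (0:ℝ) • Δ‖⁻¹ • (w + (0:ℝ) • Δ), Δ⟫))
        ≤ (n:ℝ)⁻¹ * ∑ _i : Fin n, K * s * ‖Δ‖^2 := by
          apply mul_le_mul_of_nonneg_left _ (by positivity)
          exact Finset.sum_le_sum (fun i _ => hper i)
      _ = K * s * ‖Δ‖^2 := by
          rw [Finset.sum_const, Finset.card_univ, Fintype.card_fin, nsmul_eq_mul]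
          field_simp
  -- the quadratic upper bound function
  set M : ℝ := K * ‖Δ‖^2 with hM
  set ψ : ℝ → ℝ := fun s => φ s - s * D 0 - M/2 * s^2 with hψ
  have hψder : ∀ s : ℝ, s ∈ Set.Icc (0:ℝ) 1 → HasDerivAt ψ (D s - D 0 - M * s) s := by
    intro s hs
    have h1 := (hder s hs).sub ((hasDerivAt_id s).mul_const (D 0))
    have h2 : HasDerivAt (fun s : ℝ => M/2 * s^2) (M * s) s := by
      have h3 := (hasDerivAt_pow 2 s).const_mul (M/2)
      refine h3.congr_deriv (Eq.symm ?_)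
      push_cast; ring
    have h4 := h1.sub h2
    refine h4.congr_deriv (Eq.symm ?_)
    ring
  have hanti : AntitoneOn ψ (Set.Icc 0 1) := by
    apply antitoneOn_of_deriv_nonpos (convex_Icc 0 1)
    · intro s hs
      exact (hψder s hs).continuousAt.continuousWithinAt
    · intro s hs
      rw [interior_Icc] at hs
      exact ((hψder s (Set.mem_Icc_of_Ioo hs)).differentiableAt).differentiableWithinAt
    · intro s hs
      rw [interior_Icc] at hs
      rw [(hψder s (Set.mem_Icc_of_Ioo hs)).deriv]
      have h5 := hlip s (Set.mem_Icc_of_Ioo hs)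
      rw [hM]
      nlinarith [h5]
  have hfin := hanti h00 h11 zero_le_one
  have hψ1 : ψ 1 = φ 1 - D 0 - M/2 := by rw [hψ]; norm_num
  have hψ0 : ψ 0 = φ 0 := by rw [hψ]; norm_num
  have hφ1 : φ 1 = gdL x y α (w + Δ) := by
    rw [hφ, gdL]
    simp only
    congr 1
    apply Finset.sum_congr rfl
    intro i _
    congr 3
    rw [hA, hB, gdZ]
    simp only [one_smul, one_mul, inner_add_left]
    ring
  have hφ0 : φ 0 = gdL x y α w := by
    rw [hφ, gdL]
    simp only
    congr 1
    apply Finset.sum_congr rfl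
    intro i _
    congr 3
    rw [hA, hB, gdZ]
    simp only [zero_smul, add_zero, zero_mul]
  have hD0 : D 0 = ⟪gdV x y α w, Δ⟫ := by
    rw [gdV_inner, hD]
    simp only [zero_smul, add_zero, zero_mul, hA, hB, gdZ]
    congr 1
    apply Finset.sum_congr rfl
    intro i _
    rw [real_inner_comm Δ (x i)]
  rw [hψ1, hψ0, hφ1, hφ0, hD0, hM] at hfin
  linarith

end AlphaGD

lemma sigFn_zero : sigFn 0 = 1/2 := by
  simp [sigFn, Real.exp_zero]
  norm_num

set_option maxHeartbeats 2000000 in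
/-- convergence of `α`-GD for logistic regression: with `w₀ = 0`, `η₀ = 1`
and `η_t ≤ (2α/(γ−α) + (1+α)²)⁻¹` for `t ≥ 1`, for every `t ≥ 2`,
`L_rob(w_t) ≤ 1/t + (1/4 + ln(t)²/(γ−α)²) / (Σ_{j=1}^{t−1} η_j)`. -/
theorem alpha_gd_logistic_robust_loss_convergence
    (d n : ℕ) (hn : 0 < n) (x : Fin n → EuclideanSpace ℝ (Fin d)) (y : Fin n → ℝ)
    (hx : ∀ i, ‖x i‖ ≤ 1) (hy : ∀ i, y i = 1 ∨ y i = -1)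
    (wstar : EuclideanSpace ℝ (Fin d)) (hwstar : ‖wstar‖ = 1)
    (γ α : ℝ) (hγ1 : γ ≤ 1) (hmargin : ∀ i, γ ≤ y i * ⟪wstar, x i⟫)
    (hα0 : 0 ≤ α) (hαγ : α < γ)
    (η : ℕ → ℝ) (hηpos : ∀ t, 0 < η t) (hη0 : η 0 = 1)
    (hηle : ∀ t, 1 ≤ t → η t ≤ (2 * α / (γ - α) + (1 + α) ^ 2)⁻¹)
    (w : ℕ → EuclideanSpace ℝ (Fin d)) (hw0 : w 0 = 0)
    (hupd : ∀ t : ℕ, w (t + 1) = w t - (η t / n) •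
      ∑ i, deriv (fun u => Real.log (1 + Real.exp u)) (-(y i) * ⟪w t, x i⟫ + α * ‖w t‖) •
        (-(y i) • x i + α • (‖w t‖⁻¹ • w t))) :
    ∀ t : ℕ, 2 ≤ t →
      (1 / n : ℝ) * ∑ i, Real.log (1 + Real.exp (-(y i) * ⟪w t, x i⟫ + α * ‖w t‖)) ≤
        1 / (t : ℝ) +
          (1 / 4 + Real.log t ^ 2 / (γ - α) ^ 2) / (∑ j ∈ Finset.Icc 1 (t - 1), η j) := by
  have hγα : (0:ℝ) < γ - α := by linarith
  have hγ0 : (0:ℝ) < γ := by linarith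
  have hnR : (0:ℝ) < (n:ℝ) := by exact_mod_cast hn
  -- the update in terms of gdV
  have hupd' : ∀ t : ℕ, w (t + 1) = w t - η t • gdV x y α (w t) := by
    intro t
    rw [hupd t, div_eq_mul_inv, mul_smul]
    congr 1
    rw [gdV]
    congr 1
    congr 1
    apply Finset.sum_congr rfl
    intro i _
    rw [deriv_logexp, gdZ]
  -- w 1 explicitly
  have hw1eq : w 1 = -(gdV x y α 0) := by
    have := hupd' 0
    rw [hw0, hη0, one_smul, zero_sub] at this
    exact this
  have hz0 : ∀ i, gdZ x y α (0 : EuclideanSpace ℝ (Fin d)) i = 0 := by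
    intro i; simp [gdZ]
  have hVw : ∀ v : EuclideanSpace ℝ (Fin d), ⟪gdV x y α v, wstar⟫ ≤ 0 :=
    gdV_inner_wstar x y α wstar hwstar hmargin hα0 hαγ.le
  -- lower bound on the inner product with wstar
  have hlow : ∀ t : ℕ, 1 ≤ t → γ/2 ≤ ⟪w t, wstar⟫ := by
    intro t ht
    induction t with
    | zero => omega
    | succ k ih =>
      by_cases hk : 1 ≤ k
      · have h1 := ih hk
        rw [hupd' k, inner_sub_left, real_inner_smul_left]
        nlinarith [hVw (w k), (hηpos k).le]
      · have hk0 : k = 0 := by omega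
        subst hk0
        rw [hw1eq, inner_neg_left, gdV_inner]
        simp only [hz0, sigFn_zero, norm_zero, inv_zero, zero_smul, inner_zero_left,
          mul_zero, add_zero]
        have hsum : ∑ i, (1/2 * (-(y i) * ⟪x i, wstar⟫)) ≤ (n:ℝ) * (-(γ/2)) := by
          calc ∑ i, (1/2 * (-(y i) * ⟪x i, wstar⟫)) ≤ ∑ _i : Fin n, (-(γ/2)) := by
                apply Finset.sum_le_sum
                intro i _
                have h := hmargin i
                rw [real_inner_comm wstar (x i)]
                nlinarith
            _ = (n:ℝ) * (-(γ/2)) := by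
                rw [Finset.sum_const, Finset.card_univ, Fintype.card_fin, nsmul_eq_mul]
        have h2 := mul_le_mul_of_nonneg_left hsum (by positivity : (0:ℝ) ≤ (n:ℝ)⁻¹)
        have he : (n:ℝ)⁻¹ * ((n:ℝ) * (-(γ/2))) = -(γ/2) := by field_simp
        linarith
  -- lower bound on norms along the segments
  have hnormlow : ∀ t : ℕ, 1 ≤ t → ∀ s : ℝ, s ∈ Set.Icc (0:ℝ) 1 →
      γ/2 ≤ ‖w t + s • (-(η t) • gdV x y α (w t))‖ := by
    intro t ht s hs
    have h1 : γ/2 ≤ ⟪w t + s • (-(η t) • gdV x y α (w t)), wstar⟫ := by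
      rw [inner_add_left, real_inner_smul_left, real_inner_smul_left]
      nlinarith [hlow t ht,
        mul_nonneg (mul_nonneg hs.1 (hηpos t).le) (neg_nonneg.mpr (hVw (w t)))]
    have h2 := real_inner_le_norm (w t + s • (-(η t) • gdV x y α (w t))) wstar
    rw [hwstar, mul_one] at h2
    linarith
  -- descent lemma
  set β : ℝ := 2 * α / (γ - α) + (1 + α) ^ 2 with hβ
  have hβpos : (0:ℝ) < β := by
    rw [hβ]
    have h1 : (0:ℝ) ≤ 2 * α / (γ - α) := div_nonneg (by linarith) hγα.le
    nlinarith [sq_nonneg α, hα0]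
  have hdescent : ∀ t : ℕ, 1 ≤ t →
      gdL x y α (w (t+1)) ≤ gdL x y α (w t) - η t / 2 * ‖gdV x y α (w t)‖^2 := by
    intro t ht
    have hsm := gdL_smooth x y α hn hx hy hα0 (show (0:ℝ) < γ/2 by linarith) (w t)
      (-(η t) • gdV x y α (w t)) (hnormlow t ht)
    have hwt1 : w t + -(η t) • gdV x y α (w t) = w (t+1) := by
      rw [hupd' t, neg_smul, sub_eq_add_neg]
    rw [hwt1] at hsm
    have hInner : ⟪gdV x y α (w t), -(η t) • gdV x y α (w t)⟫
        = -(η t) * ‖gdV x y α (w t)‖^2 := by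
      rw [real_inner_smul_right, real_inner_self_eq_norm_sq]
    have hNorm : ‖-(η t) • gdV x y α (w t)‖^2 = η t^2 * ‖gdV x y α (w t)‖^2 := by
      rw [norm_smul, Real.norm_eq_abs, mul_pow, sq_abs]
      ring
    rw [hInner, hNorm] at hsm
    set Vn := ‖gdV x y α (w t)‖^2 with hVn
    have hVnn : (0:ℝ) ≤ Vn := by rw [hVn]; positivity
    have hK0 : (0:ℝ) ≤ (1+α)^2/4 + α/(γ/2) := by
      have h := div_nonneg hα0 (by linarith : (0:ℝ) ≤ γ/2)
      nlinarith [sq_nonneg (1+α)]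
    have hKβ : (1+α)^2/4 + α/(γ/2) ≤ β := by
      rw [hβ]
      have h2 : 2*α/γ ≤ 2*α/(γ-α) := by
        apply div_le_div_of_nonneg_left (by linarith) hγα (by linarith)
      have h3 : α/(γ/2) = 2*α/γ := by
        field_simp
      nlinarith [sq_nonneg (1+α)]
    have hηβ : η t * β ≤ 1 := by
      have h1 := hηle t ht
      calc η t * β ≤ β⁻¹ * β := mul_le_mul_of_nonneg_right h1 hβpos.le
        _ = 1 := inv_mul_cancel₀ hβpos.ne'
    have hstep : (((1+α)^2/4 + α/(γ/2))/2) * (η t^2 * Vn) ≤ η t/2 * Vn := by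
      have h1 : ((1+α)^2/4 + α/(γ/2)) * η t ≤ 1 := by
        calc ((1+α)^2/4 + α/(γ/2)) * η t ≤ β * η t :=
              mul_le_mul_of_nonneg_right hKβ (hηpos t).le
          _ ≤ 1 := by linarith [hηβ, mul_comm β (η t)]
      have h2 : (0:ℝ) ≤ η t/2 * Vn := mul_nonneg (by linarith [hηpos t]) hVnn
      nlinarith [mul_le_mul_of_nonneg_right h1 h2]
    nlinarith [hsm, hstep]
  -- one-step regret
  have hregret : ∀ (t : ℕ), 1 ≤ t → ∀ u : EuclideanSpace ℝ (Fin d),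
      2 * η t * (gdL x y α (w (t+1)) - gdL x y α u) ≤ ‖w t - u‖^2 - ‖w (t+1) - u‖^2 := by
    intro t ht u
    have hsub := gdL_subgrad x y α hα0 (w t) u
    have hsub' : gdL x y α (w t) - gdL x y α u ≤ ⟪gdV x y α (w t), w t - u⟫ := by
      have he : ⟪gdV x y α (w t), u - w t⟫ = -⟪gdV x y α (w t), w t - u⟫ := by
        rw [show u - w t = -(w t - u) by abel, inner_neg_right]
      rw [he] at hsub
      linarith
    have hdes := hdescent t ht
    have hexp : ‖w (t+1) - u‖^2 = ‖w t - u‖^2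
        - 2 * η t * ⟪gdV x y α (w t), w t - u⟫ + η t^2 * ‖gdV x y α (w t)‖^2 := by
      rw [hupd' t]
      have he : w t - η t • gdV x y α (w t) - u = (w t - u) + (-(η t)) • gdV x y α (w t) := by
        rw [neg_smul]; abel
      rw [he, norm_add_sq_real, real_inner_smul_right, norm_smul, Real.norm_eq_abs,
        mul_pow, sq_abs, real_inner_comm]
      ring
    have e1 := mul_le_mul_of_nonneg_left hdes (by linarith [hηpos t] : (0:ℝ) ≤ 2 * η t)
    have e2 := mul_le_mul_of_nonneg_left hsub' (by linarith [hηpos t] : (0:ℝ) ≤ 2 * η t)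
    rw [hexp]
    nlinarith [e1, e2]
  -- monotonicity
  have hmono : ∀ a b : ℕ, 1 ≤ a → a ≤ b → gdL x y α (w b) ≤ gdL x y α (w a) := by
    intro a b ha hab
    induction b with
    | zero => omega
    | succ k ih =>
      rcases eq_or_lt_of_le hab with h | h
      · rw [← h]
      · have hak : a ≤ k := by omega
        have h1 := ih hak
        have h2 := hdescent k (by omega)
        nlinarith [hηpos k, sq_nonneg ‖gdV x y α (w k)‖]
  -- main part
  intro T hT
  set r : ℝ := Real.log T / (γ - α) with hr
  have hT1 : (1:ℝ) ≤ (T:ℝ) := by exact_mod_cast Nat.one_le_of_lt hT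
  have hTpos : (0:ℝ) < (T:ℝ) := by linarith
  have hr0 : 0 ≤ r := div_nonneg (Real.log_nonneg hT1) hγα.le
  set u : EuclideanSpace ℝ (Fin d) := r • wstar with hu
  -- telescoping
  have htel : ∀ t : ℕ, 1 ≤ t →
      ∑ j ∈ Finset.Icc 1 (t-1), 2 * η j * (gdL x y α (w (j+1)) - gdL x y α u)
      ≤ ‖w 1 - u‖^2 - ‖w t - u‖^2 := by
    intro t ht
    induction t with
    | zero => omega
    | succ k ih =>
      by_cases hk : 1 ≤ k
      · obtain ⟨m, rfl⟩ : ∃ m, k = m + 1 := ⟨k-1, by omega⟩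
        have ihh := ih hk
        rw [show m + 1 + 1 - 1 = m + 1 from by omega,
          Finset.sum_Icc_succ_top (by omega : 1 ≤ m + 1)]
        have hreg := hregret (m+1) (by omega) u
        rw [show m + 1 - 1 = m from by omega] at ihh
        linarith
      · have hk0 : k = 0 := by omega
        subst hk0
        simp
  have hSpos : (0:ℝ) < ∑ j ∈ Finset.Icc 1 (T-1), η j := by
    apply Finset.sum_pos (fun j _ => hηpos j)
    rw [Finset.nonempty_Icc]
    omega
  set S : ℝ := ∑ j ∈ Finset.Icc 1 (T-1), η j with hS
  have hkey : 2 * S * (gdL x y α (w T) - gdL x y α u) ≤ ‖w 1 - u‖^2 := by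
    have h1 : ∑ j ∈ Finset.Icc 1 (T-1), 2 * η j * (gdL x y α (w T) - gdL x y α u)
        ≤ ∑ j ∈ Finset.Icc 1 (T-1), 2 * η j * (gdL x y α (w (j+1)) - gdL x y α u) := by
      apply Finset.sum_le_sum
      intro j hj
      rw [Finset.mem_Icc] at hj
      have hmono' := hmono (j+1) T (by omega) (by omega)
      nlinarith [hηpos j]
    have h2 := htel T (by omega)
    have h3 : 2 * S * (gdL x y α (w T) - gdL x y α u)
        = ∑ j ∈ Finset.Icc 1 (T-1), 2 * η j * (gdL x y α (w T) - gdL x y α u) := by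
      rw [hS, mul_assoc, Finset.sum_mul, Finset.mul_sum]
      apply Finset.sum_congr rfl
      intro j _
      ring
    nlinarith [sq_nonneg ‖w T - u‖, h1, h2, h3]
  -- value of the loss at the comparator
  have hLu : gdL x y α u ≤ 1 / T := by
    have hper : ∀ i : Fin n, Real.log (1 + Real.exp (gdZ x y α u i)) ≤ 1 / T := by
      intro i
      have hz : gdZ x y α u i ≤ -Real.log T := by
        rw [gdZ, hu, real_inner_smul_left, norm_smul, hwstar, mul_one, Real.norm_eq_abs,
          abs_of_nonneg hr0]
        have hm := hmargin i
        have he : -(y i) * (r * ⟪wstar, x i⟫) = -(r * (y i * ⟪wstar, x i⟫)) := by ring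
        rw [he]
        have h1 : r * γ ≤ r * (y i * ⟪wstar, x i⟫) := mul_le_mul_of_nonneg_left hm hr0
        have h2 : r * (γ - α) = Real.log T := by
          rw [hr]; field_simp
        nlinarith
      calc Real.log (1 + Real.exp (gdZ x y α u i))
          ≤ Real.log (1 + Real.exp (-Real.log T)) := logexp_mono hz
        _ ≤ 1 / T := by
            rw [Real.exp_neg, Real.exp_log hTpos]
            have hlog := Real.log_le_sub_one_of_pos
              (show (0:ℝ) < 1 + (T:ℝ)⁻¹ by positivity)
            rw [one_div]
            linarith
    rw [gdL]
    have hsum : ∑ i, Real.log (1 + Real.exp (gdZ x y α u i)) ≤ (n:ℝ) * (1/T) := by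
      calc ∑ i, Real.log (1 + Real.exp (gdZ x y α u i)) ≤ ∑ _i : Fin n, (1/(T:ℝ)) :=
            Finset.sum_le_sum (fun i _ => hper i)
        _ = (n:ℝ) * (1/T) := by
            rw [Finset.sum_const, Finset.card_univ, Fintype.card_fin, nsmul_eq_mul]
    have h2 := mul_le_mul_of_nonneg_left hsum (by positivity : (0:ℝ) ≤ (n:ℝ)⁻¹)
    have he : (n:ℝ)⁻¹ * ((n:ℝ) * (1/T)) = 1/T := by field_simp
    linarith
  -- bound on ‖w 1‖
  have hw1 : ‖w 1‖ ≤ 1/2 := by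
    rw [hw1eq, norm_neg, gdV]
    simp only [hz0, sigFn_zero, norm_zero, inv_zero, zero_smul, smul_zero, add_zero]
    rw [norm_smul, Real.norm_eq_abs, abs_of_nonneg (by positivity : (0:ℝ) ≤ (n:ℝ)⁻¹)]
    have hsum : ‖∑ i, (1/2 : ℝ) • (-(y i) • x i)‖ ≤ (n:ℝ) * (1/2) := by
      calc ‖∑ i, (1/2 : ℝ) • (-(y i) • x i)‖ ≤ ∑ i, ‖(1/2 : ℝ) • (-(y i) • x i)‖ :=
            norm_sum_le _ _
        _ ≤ ∑ _i : Fin n, (1/2 : ℝ) := by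
            apply Finset.sum_le_sum
            intro i _
            rw [norm_smul, norm_smul, Real.norm_eq_abs, Real.norm_eq_abs, abs_neg]
            have hyi : |y i| = 1 := by rcases hy i with h | h <;> simp [h]
            rw [hyi, one_mul]
            rw [abs_of_nonneg (by norm_num : (0:ℝ) ≤ (1/2:ℝ))]
            nlinarith [hx i, norm_nonneg (x i)]
        _ = (n:ℝ) * (1/2) := by
            rw [Finset.sum_const, Finset.card_univ, Fintype.card_fin, nsmul_eq_mul]
    calc (n:ℝ)⁻¹ * ‖∑ i, (1/2 : ℝ) • (-(y i) • x i)‖ ≤ (n:ℝ)⁻¹ * ((n:ℝ) * (1/2)) := by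
          apply mul_le_mul_of_nonneg_left hsum (by positivity)
      _ = 1/2 := by field_simp
  have hnu : ‖u‖ = r := by
    rw [hu, norm_smul, hwstar, mul_one, Real.norm_eq_abs, abs_of_nonneg hr0]
  have hw1u : ‖w 1 - u‖^2 ≤ (1/2 + r)^2 := by
    have h1 := norm_sub_le (w 1) u
    rw [hnu] at h1
    nlinarith [norm_nonneg (w 1 - u), hw1, hr0, norm_nonneg (w 1)]
  -- conclusion
  have hLT : gdL x y α (w T) ≤ 1/T + (1/4 + Real.log T^2/(γ-α)^2) / S := by
    have h5 : gdL x y α (w T) - gdL x y α u ≤ ‖w 1 - u‖^2 / (2*S) := by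
      rw [le_div_iff₀ (by linarith [hSpos] : (0:ℝ) < 2*S)]
      nlinarith [hkey]
    have h4 : ‖w 1 - u‖^2 / (2*S) ≤ (1/4 + r^2) / S := by
      rw [div_le_div_iff₀ (by linarith [hSpos] : (0:ℝ) < 2*S) hSpos]
      nlinarith [sq_nonneg (r - 1/2), hSpos, hw1u]
    have h6 : r^2 = Real.log T^2/(γ-α)^2 := by
      rw [hr, div_pow]
    rw [h6] at h4
    linarith [h5, h4, hLu]
  have hgoal : (1 / n : ℝ) * ∑ i, Real.log (1 + Real.exp (-(y i) * ⟪w T, x i⟫ + α * ‖w T‖))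
      = gdL x y α (w T) := by
    rw [gdL, one_div]
    rfl
  rw [hgoal]
  exact hLT
end

section
/- Let f(u) = ln(1+exp(u)), let S = {(x_i,y_i)}_{i=1}^n ⊂ R^d × {±1} with ‖x_i‖ ≤ 1, suppose a unit vector w* satisfies y_i⟨w*,x_i⟩ ≥ γ for all i with γ ≤ 1, and let 0 ≤ α < γ. Run α-SGD with w₀ = 0 and constant step size η ≤ min{1, 2(1+α)^{−2}}, where at each step t an index i_t is drawn independently and uniformly from {1,…,n}. Then for every t ≥ 1 and every δ ∈ (0,1), with probability at least 1−δ over the random indices, the averaged iterate ŵ_t = (1/t)·Σ_{j<t} w_j satisfies L_rob(ŵ_t) ≤ (1/(ηt))·(4ln(t)/(γ−α) + 6)·(8ln(t)/(γ−α)² + 8/(γ−α) + 4ln(1/δ)). -/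
namespace AlphaSGDAux

noncomputable def lf (u : ℝ) : ℝ := Real.log (1 + Real.exp u)
lemma lf_eq (u : ℝ) : lf u = Real.log (1 + Real.exp u) := rfl

noncomputable def lsig (u : ℝ) : ℝ := Real.exp u / (1 + Real.exp u)

lemma one_add_exp_pos (u : ℝ) : 0 < 1 + Real.exp u := by positivity

lemma hasDerivAt_lf (u : ℝ) : HasDerivAt lf (lsig u) u := by
  have h1 : HasDerivAt (fun v : ℝ => 1 + Real.exp v) (Real.exp u) u :=
    (Real.hasDerivAt_exp u).const_add 1
  have := h1.log (ne_of_gt (one_add_exp_pos u))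
  unfold lf lsig
  exact this

lemma deriv_lf (u : ℝ) : deriv (fun u => Real.log (1 + Real.exp u)) u = lsig u :=
  (hasDerivAt_lf u).deriv

lemma lsig_nonneg (u : ℝ) : 0 ≤ lsig u := by
  unfold lsig; positivity

lemma lsig_lt_one (u : ℝ) : lsig u < 1 := by
  unfold lsig
  rw [div_lt_one (one_add_exp_pos u)]
  linarith

lemma lsig_mono : Monotone lsig := by
  intro a b hab
  unfold lsig
  rw [div_le_div_iff₀ (one_add_exp_pos a) (one_add_exp_pos b)]
  have := Real.exp_le_exp.2 hab
  nlinarith [Real.exp_pos a, Real.exp_pos b]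

lemma lf_nonneg (u : ℝ) : 0 ≤ lf u := by
  unfold lf
  exact Real.log_nonneg (by nlinarith [Real.exp_pos u])

lemma lf_mono : Monotone lf := by
  intro a b hab
  unfold lf
  exact Real.log_le_log (one_add_exp_pos a) (by have := Real.exp_le_exp.2 hab; linarith)

lemma one_sub_lsig (u : ℝ) : 1 - lsig u = (1 + Real.exp u)⁻¹ := by
  unfold lsig
  field_simp
  ring

lemma lf_eq_neg_log (u : ℝ) : lf u = -Real.log (1 - lsig u) := by
  rw [one_sub_lsig, Real.log_inv, lf, neg_neg]

lemma lsig_le_lf (u : ℝ) : lsig u ≤ lf u := by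
  have h := Real.log_le_sub_one_of_pos (inv_pos.2 (one_add_exp_pos u))
  rw [Real.log_inv] at h
  have : 1 - (1 + Real.exp u)⁻¹ = lsig u := by rw [← one_sub_lsig]; ring
  unfold lf
  linarith [this]

lemma grad_ineq (a b : ℝ) : lf a + lsig a * (b - a) ≤ lf b := by
  rcases lt_trichotomy a b with h | h | h
  · obtain ⟨c, hc, hc2⟩ := exists_hasDerivAt_eq_slope lf lsig h
      (fun u _ => (hasDerivAt_lf u).continuousAt.continuousWithinAt)
      (fun u _ => hasDerivAt_lf u)
    have hm : lsig a ≤ lsig c := lsig_mono hc.1.le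
    have hba : 0 < b - a := by linarith
    rw [eq_div_iff (ne_of_gt hba)] at hc2
    nlinarith
  · simp [h]
  · obtain ⟨c, hc, hc2⟩ := exists_hasDerivAt_eq_slope lf lsig h
      (fun u _ => (hasDerivAt_lf u).continuousAt.continuousWithinAt)
      (fun u _ => hasDerivAt_lf u)
    have hm : lsig c ≤ lsig a := lsig_mono hc.2.le
    have hba : 0 < a - b := by linarith
    rw [eq_div_iff (by linarith : a - b ≠ 0)] at hc2
    · nlinarith
  
-- 2 s^2 ≤ -log (1-s) for s ∈ [0,1)
lemma sq_le_neg_log (s : ℝ) (h0 : 0 ≤ s) (h1 : s < 1) : 2 * s ^ 2 ≤ -Real.log (1 - s) := by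
  set g : ℝ → ℝ := fun s => -Real.log (1 - s) - 2 * s ^ 2 with hg
  have hmono : MonotoneOn g (Set.Ico (0:ℝ) 1) := by
    have hderiv : ∀ v ∈ Set.Ioo (0:ℝ) 1, HasDerivAt g ((1 - v)⁻¹ - 4 * v) v := by
      intro v hv
      have h1v : (1:ℝ) - v ≠ 0 := by cases hv with | intro a b => intro hc; linarith
      have hl : HasDerivAt (fun s : ℝ => 1 - s) (-1) v := by
        simpa using (hasDerivAt_id v).const_sub 1
      have hlog := (hl.log h1v).neg
      have hq : HasDerivAt (fun s : ℝ => 2 * s ^ 2) (4 * v) v := by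
        have h := (hasDerivAt_pow 2 v).const_mul (2:ℝ)
        refine h.congr_deriv ?_
        push_cast
        ring
      have := hlog.sub hq
      refine this.congr_deriv ?_
      ring
    apply monotoneOn_of_deriv_nonneg (convex_Ico 0 1)
    · apply ContinuousOn.sub
      · apply ContinuousOn.neg
        apply ContinuousOn.log
        · exact (continuousOn_const.sub continuousOn_id)
        · intro v hv; intro hc
          have : v < 1 := hv.2
          have : (1:ℝ) - v = 0 := by simpa using hc
          linarith
      · exact (continuousOn_const.mul (continuousOn_pow 2))
    · rw [interior_Ico]
      intro v hv
      exact (hderiv v hv).differentiableAt.differentiableWithinAt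
    · rw [interior_Ico]
      intro v hv
      rw [(hderiv v hv).deriv]
      have hv1 : 0 < 1 - v := by linarith [hv.2]
      have h4 : 4 * v * (1 - v) ≤ 1 := by nlinarith [sq_nonneg (2*v-1)]
      have : 4 * v ≤ (1 - v)⁻¹ := by
        rw [inv_eq_one_div, le_div_iff₀ hv1]
        linarith
      linarith
  have h00 : (0:ℝ) ∈ Set.Ico (0:ℝ) 1 := by constructor <;> norm_num
  have hs : s ∈ Set.Ico (0:ℝ) 1 := ⟨h0, h1⟩
  have := hmono h00 hs h0
  simp [hg] at this
  linarith

lemma two_lsig_sq_le_lf (u : ℝ) : 2 * lsig u ^ 2 ≤ lf u := by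
  rw [lf_eq_neg_log]
  exact sq_le_neg_log _ (lsig_nonneg u) (lsig_lt_one u)

lemma lf_le (u : ℝ) : lf u ≤ Real.log 2 + max u 0 := by
  have hb : 1 + Real.exp u ≤ 2 * Real.exp (max u 0) := by
    rcases le_total u 0 with h | h
    · rw [max_eq_right h]
      have := Real.exp_le_exp.2 h
      rw [Real.exp_zero] at this
      rw [Real.exp_zero]
      linarith
    · rw [max_eq_left h]
      have : (1:ℝ) ≤ Real.exp u := Real.one_le_exp h
      linarith
  calc lf u ≤ Real.log (2 * Real.exp (max u 0)) :=
        Real.log_le_log (one_add_exp_pos u) hb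
    _ = Real.log 2 + max u 0 := by
        rw [Real.log_mul (by norm_num) (ne_of_gt (Real.exp_pos _)), Real.log_exp]

lemma lf_neg_le_exp (v : ℝ) : lf v ≤ Real.exp v := by
  have := Real.log_le_sub_one_of_pos (one_add_exp_pos v)
  unfold lf
  linarith

lemma exp_neg_le (v : ℝ) (h0 : 0 ≤ v) (h1 : v ≤ 1) : Real.exp (-v) ≤ 1 - v / 2 := by
  have h2 : 1 + v ≤ Real.exp v := by linarith [Real.add_one_le_exp v]
  have h3 : Real.exp (-v) ≤ (1 + v)⁻¹ := by
    rw [Real.exp_neg]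
    exact inv_anti₀ (by linarith) h2
  have h4 : (1 + v)⁻¹ ≤ 1 - v / 2 := by
    rw [inv_le_iff_one_le_mul₀ (by linarith)]
    nlinarith
  linarith

lemma log_two_le_one : Real.log 2 ≤ 1 := by
  have := Real.log_le_sub_one_of_pos (by norm_num : (0:ℝ) < 2)
  linarith

-- finite Jensen from gradient inequality
lemma jensen_avg (t : ℕ) (v : ℕ → ℝ) :
    (t : ℝ) * lf ((t : ℝ)⁻¹ * ∑ j ∈ Finset.range t, v j) ≤ ∑ j ∈ Finset.range t, lf (v j) := by
  rcases Nat.eq_zero_or_pos t with h | h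
  · simp [h]
  set a := (t : ℝ)⁻¹ * ∑ j ∈ Finset.range t, v j with ha
  have key : ∀ j ∈ Finset.range t, lf a + lsig a * (v j - a) ≤ lf (v j) :=
    fun j _ => grad_ineq a (v j)
  have hsum := Finset.sum_le_sum key
  have ht0 : (t:ℝ) ≠ 0 := by positivity
  have hsa : ∑ j ∈ Finset.range t, (lf a + lsig a * (v j - a)) = (t:ℝ) * lf a := by
    have hS : ∑ j ∈ Finset.range t, v j = (t:ℝ) * a := by
      rw [ha]; field_simp
    rw [Finset.sum_add_distrib, Finset.sum_const, Finset.card_range, ← Finset.mul_sum,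
        Finset.sum_sub_distrib, Finset.sum_const, Finset.card_range, hS, nsmul_eq_mul,
        nsmul_eq_mul]
    ring
  rw [hsa] at hsum
  exact hsum

lemma sum_exp_step {n : ℕ} (hn : 0 < n) (M : ℝ) (hM : 0 < M) (l : Fin n → ℝ)
    (h0 : ∀ a, 0 ≤ l a) (h1 : ∀ a, l a ≤ M) :
    ∑ a : Fin n, Real.exp ((1/(n:ℝ)) * (∑ i, l i) / (4*M) - l a / (2*M)) ≤ n := by
  have hn0 : (n:ℝ) ≠ 0 := by exact_mod_cast hn.ne'
  set L := (1/(n:ℝ)) * (∑ i, l i) with hL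
  have hsum : ∑ i, l i = (n:ℝ) * L := by rw [hL]; field_simp
  have step1 : ∀ a, Real.exp (L/(4*M) - l a/(2*M)) ≤ Real.exp (L/(4*M)) * (1 - l a/(4*M)) := by
    intro a
    rw [sub_eq_add_neg, Real.exp_add]
    apply mul_le_mul_of_nonneg_left _ (Real.exp_nonneg _)
    have hv0 : 0 ≤ l a / (2*M) := div_nonneg (h0 a) (by positivity)
    have hv1 : l a / (2*M) ≤ 1 := by
      rw [div_le_one (by positivity)]
      linarith [h1 a]
    have := exp_neg_le (l a / (2*M)) hv0 hv1
    have heq : l a / (2*M) / 2 = l a / (4*M) := by ring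
    rw [heq] at this
    exact this
  calc ∑ a : Fin n, Real.exp (L/(4*M) - l a/(2*M))
      ≤ ∑ a : Fin n, Real.exp (L/(4*M)) * (1 - l a/(4*M)) :=
        Finset.sum_le_sum (fun a _ => step1 a)
    _ = Real.exp (L/(4*M)) * ((n:ℝ) * (1 - L/(4*M))) := by
        rw [← Finset.mul_sum, Finset.sum_sub_distrib, Finset.sum_const, Finset.card_univ,
          Fintype.card_fin, ← Finset.sum_div, hsum, nsmul_eq_mul]
        ring
    _ ≤ Real.exp (L/(4*M)) * ((n:ℝ) * Real.exp (-(L/(4*M)))) := by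
        apply mul_le_mul_of_nonneg_left _ (Real.exp_nonneg _)
        apply mul_le_mul_of_nonneg_left _ (by positivity)
        linarith [Real.add_one_le_exp (-(L/(4*M)))]
    _ = (n:ℝ) := by
        rw [← mul_assoc, mul_comm (Real.exp _), mul_assoc, ← Real.exp_add]
        simp

open scoped Classical in
lemma sum_prod_le (t n : ℕ) (hn : 0 < n) (G : ℕ → (Fin t → Fin n) → ℝ)
    (hpos : ∀ j ω, 0 ≤ G j ω)
    (hdep : ∀ j, j < t → ∀ ω ω' : Fin t → Fin n,
      (∀ i : Fin t, (i:ℕ) ≤ j → ω i = ω' i) → G j ω = G j ω')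
    (havg : ∀ (k : ℕ) (hk : k < t) (ω : Fin t → Fin n),
      ∑ a : Fin n, G k (Function.update ω ⟨k, hk⟩ a) ≤ n) :
    ∑ ω : Fin t → Fin n, ∏ j ∈ Finset.range t, G j ω ≤ (n:ℝ) ^ t := by
  have a0 : Fin n := ⟨0, hn⟩
  have key : ∀ k, k ≤ t →
      ∑ ω : Fin t → Fin n, ∏ j ∈ Finset.range k, G j ω ≤ (n:ℝ) ^ t := by
    intro k
    induction k with
    | zero =>
      intro _
      simp only [Finset.range_zero, Finset.prod_empty]
      rw [Finset.sum_const, Finset.card_univ, nsmul_eq_mul, mul_one]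
      rw [show Fintype.card (Fin t → Fin n) = n ^ t by simp [Fintype.card_fun]]
      push_cast
      exact le_rfl
    | succ k ih =>
      intro hk1
      have hk : k < t := hk1
      have ihk := ih (le_of_lt hk)
      set pos : Fin t := ⟨k, hk⟩ with hpos'
      set e := Equiv.funSplitAt pos (Fin n) with he
      -- rewrite both sums through the equivalence
      have hstep : ∑ ω : Fin t → Fin n, ∏ j ∈ Finset.range (k+1), G j ω ≤
          ∑ ω : Fin t → Fin n, ∏ j ∈ Finset.range k, G j ω := by
        rw [← Equiv.sum_comp e.symm (fun ω => ∏ j ∈ Finset.range (k+1), G j ω),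
            ← Equiv.sum_comp e.symm (fun ω => ∏ j ∈ Finset.range k, G j ω)]
        rw [Fintype.sum_prod_type_right, Fintype.sum_prod_type_right]
        apply Finset.sum_le_sum
        intro g _
        -- agreement off the k-th coordinate
        have hagree : ∀ (a a' : Fin n) (i : Fin t), i ≠ pos →
            e.symm (a, g) i = e.symm (a', g) i := by
          intro a a' i hi
          simp [he, Equiv.funSplitAt, Equiv.piSplitAt, dif_neg hi]
        have hprefix : ∀ a : Fin n, ∏ j ∈ Finset.range k, G j (e.symm (a, g)) =
            ∏ j ∈ Finset.range k, G j (e.symm (a0, g)) := by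
          intro a
          apply Finset.prod_congr rfl
          intro j hj
          have hjk : j < k := Finset.mem_range.1 hj
          apply hdep j (lt_trans hjk hk)
          intro i hij
          apply hagree
          intro hip
          rw [hip] at hij
          simp [hpos'] at hij
          omega
        have hupd : ∀ a : Fin n, e.symm (a, g) = Function.update (e.symm (a0, g)) pos a := by
          intro a
          funext i
          by_cases hi : i = pos
          · subst hi
            simp [he, Equiv.funSplitAt, Equiv.piSplitAt, Function.update]
          · rw [Function.update_of_ne hi]
            exact hagree a a0 i hi
        calc ∑ a : Fin n, ∏ j ∈ Finset.range (k+1), G j (e.symm (a, g))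
            = ∑ a : Fin n, (∏ j ∈ Finset.range k, G j (e.symm (a0, g))) *
                G k (Function.update (e.symm (a0, g)) pos a) := by
              apply Finset.sum_congr rfl
              intro a _
              rw [Finset.prod_range_succ, hprefix a, hupd a]
          _ = (∏ j ∈ Finset.range k, G j (e.symm (a0, g))) *
                ∑ a : Fin n, G k (Function.update (e.symm (a0, g)) pos a) := by
              rw [Finset.mul_sum]
          _ ≤ (∏ j ∈ Finset.range k, G j (e.symm (a0, g))) * (n:ℝ) := by
              apply mul_le_mul_of_nonneg_left (havg k hk _)
              exact Finset.prod_nonneg (fun j _ => hpos j _)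
          _ = ∑ a : Fin n, ∏ j ∈ Finset.range k, G j (e.symm (a, g)) := by
              rw [Finset.sum_congr rfl (fun a _ => hprefix a), Finset.sum_const,
                Finset.card_univ, Fintype.card_fin, nsmul_eq_mul, mul_comm]
      exact le_trans hstep ihk
  exact key t (le_refl t)

lemma markov_count {ι : Type*} [Fintype ι] (A : ι → ℝ) (c B : ℝ) [DecidablePred fun ω => c < A ω]
    (h : ∑ ω : ι, Real.exp (A ω) ≤ B) :
    ((Finset.univ.filter (fun ω => c < A ω)).card : ℝ) * Real.exp c ≤ B := by
  have h1 : ∑ ω ∈ Finset.univ.filter (fun ω => c < A ω), Real.exp c ≤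
      ∑ ω ∈ Finset.univ.filter (fun ω => c < A ω), Real.exp (A ω) := by
    apply Finset.sum_le_sum
    intro ω hω
    exact Real.exp_le_exp.2 (le_of_lt (Finset.mem_filter.1 hω).2)
  have h2 : ∑ ω ∈ Finset.univ.filter (fun ω => c < A ω), Real.exp (A ω) ≤
      ∑ ω : ι, Real.exp (A ω) :=
    Finset.sum_le_sum_of_subset_of_nonneg (Finset.filter_subset _ _)
      (fun ω _ _ => Real.exp_nonneg _)
  rw [Finset.sum_const, nsmul_eq_mul] at h1
  linarith

end AlphaSGDAux

open AlphaSGDAux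

set_option maxHeartbeats 4000000

open scoped RealInnerProductSpace

open scoped Classical in
/-- high-probability convergence of `α`-SGD for logistic regression.  The
randomness is the i.i.d. uniform choice of indices `ω : Fin t → Fin n`; "probability at
least `1−δ`" is expressed by counting the sequences `ω` for which the averaged iterate
`ŵ_t = (1/t)Σ_{j<t} w_j` satisfies the robust-loss bound. -/
theorem alpha_sgd_logistic_robust_loss_convergence
    (d n : ℕ) (hn : 0 < n) (x : Fin n → EuclideanSpace ℝ (Fin d)) (y : Fin n → ℝ)
    (hx : ∀ i, ‖x i‖ ≤ 1) (hy : ∀ i, y i = 1 ∨ y i = -1)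
    (wstar : EuclideanSpace ℝ (Fin d)) (hwstar : ‖wstar‖ = 1)
    (γ α : ℝ) (hγ1 : γ ≤ 1) (hmargin : ∀ i, γ ≤ y i * ⟪wstar, x i⟫)
    (hα0 : 0 ≤ α) (hαγ : α < γ)
    (η : ℝ) (hηpos : 0 < η) (hη : η ≤ min 1 (2 / (1 + α) ^ 2))
    (t : ℕ) (ht : 1 ≤ t) (δ : ℝ) (hδ0 : 0 < δ) (hδ1 : δ < 1)
    (W : (Fin t → Fin n) → ℕ → EuclideanSpace ℝ (Fin d))
    (hW0 : ∀ ω, W ω 0 = 0)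
    (hWs : ∀ (ω : Fin t → Fin n) (j : Fin t),
      W ω (j.1 + 1) = W ω j.1 - η •
        deriv (fun u => Real.log (1 + Real.exp u))
            ⟪W ω j.1, -(y (ω j)) • x (ω j) + α • (‖W ω j.1‖⁻¹ • W ω j.1)⟫ •
          (-(y (ω j)) • x (ω j) + α • (‖W ω j.1‖⁻¹ • W ω j.1))) :
    (1 - δ) * (Fintype.card (Fin t → Fin n) : ℝ) ≤
      ((Finset.univ.filter (fun ω : Fin t → Fin n =>
        (1 / n : ℝ) * ∑ i, Real.log (1 + Real.exp
            (-(y i) * ⟪(t : ℝ)⁻¹ • ∑ j ∈ Finset.range t, W ω j, x i⟫ +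
              α * ‖(t : ℝ)⁻¹ • ∑ j ∈ Finset.range t, W ω j‖)) ≤
          (1 / (η * t)) * (4 * Real.log t / (γ - α) + 6) *
            (8 * Real.log t / (γ - α) ^ 2 + 8 / (γ - α) + 4 * Real.log (1 / δ)))).card : ℝ) := by
  have hg0 : (0:ℝ) < γ - α := by linarith
  set g := γ - α with hgdef
  have hg1 : g ≤ 1 := by rw [hgdef]; linarith
  have ht0 : (0:ℝ) < t := by exact_mod_cast ht
  have hLt : 0 ≤ Real.log t := Real.log_nonneg (by exact_mod_cast ht)
  set R := Real.log t / g with hR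
  have hR0 : 0 ≤ R := div_nonneg hLt hg0.le
  have hRg : R * g = Real.log t := div_mul_cancel₀ _ hg0.ne'
  set M := 4 * R + 5 with hM
  have hM0 : (0:ℝ) < M := by rw [hM]; linarith
  set B := 2 * R + 2 with hB
  clear_value B M R g
  have hη1 : η ≤ 1 := le_trans hη (min_le_left _ _)
  have hηα : η * (1+α)^2 ≤ 2 := by
    have h2 := le_trans hη (min_le_right _ _)
    have hα1 : (0:ℝ) < (1+α)^2 := by positivity
    rw [le_div_iff₀ hα1] at h2
    exact h2
  have hn0 : (0:ℝ) < n := by exact_mod_cast hn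
  have hy1 : ∀ i, |y i| = 1 := by
    intro i; rcases hy i with h | h <;> rw [h] <;> norm_num
  have hα1' : α ≤ 1 := le_of_lt (lt_of_lt_of_le hαγ hγ1)
  -- robust loss
  set lfun : EuclideanSpace ℝ (Fin d) → Fin n → ℝ :=
    fun w i => lf (-(y i) * ⟪w, x i⟫ + α * ‖w‖) with hlfun
  set Lpop : EuclideanSpace ℝ (Fin d) → ℝ := fun w => (1/(n:ℝ)) * ∑ i, lfun w i with hLpop
  clear_value Lpop lfun
  -- basic vector facts
  have hwbar : ∀ w : EuclideanSpace ℝ (Fin d), ‖(‖w‖⁻¹ • w : EuclideanSpace ℝ (Fin d))‖ ≤ 1 := by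
    intro w
    by_cases hw : w = 0
    · simp [hw]
    · have h0 : ‖w‖ ≠ 0 := norm_ne_zero_iff.2 hw
      rw [norm_smul, Real.norm_eq_abs, abs_of_nonneg (inv_nonneg.2 (norm_nonneg w)),
        inv_mul_cancel₀ h0]
  have hinner : ∀ (w : EuclideanSpace ℝ (Fin d)) (i : Fin n),
      ⟪w, -(y i) • x i + α • (‖w‖⁻¹ • w)⟫ = -(y i) * ⟪w, x i⟫ + α * ‖w‖ := by
    intro w i
    rw [inner_add_right, real_inner_smul_right, real_inner_smul_right, real_inner_smul_right,
      real_inner_self_eq_norm_sq]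
    congr 1
    by_cases hw : w = 0
    · simp [hw]
    · have h0 : ‖w‖ ≠ 0 := norm_ne_zero_iff.2 hw
      congr 1
      field_simp
  have hznorm : ∀ (w : EuclideanSpace ℝ (Fin d)) (i : Fin n),
      ‖(-(y i) • x i + α • (‖w‖⁻¹ • w) : EuclideanSpace ℝ (Fin d))‖ ≤ 1 + α := by
    intro w i
    calc ‖(-(y i) • x i + α • (‖w‖⁻¹ • w) : EuclideanSpace ℝ (Fin d))‖
        ≤ ‖(-(y i) • x i : EuclideanSpace ℝ (Fin d))‖ +
            ‖(α • (‖w‖⁻¹ • w) : EuclideanSpace ℝ (Fin d))‖ := norm_add_le _ _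
      _ ≤ 1 + α := by
          rw [norm_smul, norm_smul, Real.norm_eq_abs, Real.norm_eq_abs, abs_neg, hy1 i, one_mul,
            abs_of_nonneg hα0]
          have h1 := hx i
          have h2 := hwbar w
          have h3 := mul_le_mul_of_nonneg_left h2 hα0
          rw [mul_one] at h3
          linarith
  -- restatement of the update
  have hWs' : ∀ (ω : Fin t → Fin n) (j : ℕ) (hj : j < t),
      W ω (j+1) = W ω j - η •
        lsig ⟪W ω j, -(y (ω ⟨j,hj⟩)) • x (ω ⟨j,hj⟩) + α • (‖W ω j‖⁻¹ • W ω j)⟫ •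
          (-(y (ω ⟨j,hj⟩)) • x (ω ⟨j,hj⟩) + α • (‖W ω j‖⁻¹ • W ω j)) := by
    intro ω j hj
    have h := hWs ω ⟨j, hj⟩
    rw [deriv_lf] at h
    exact h
  -- prefix dependence of the iterates
  have hWdep : ∀ (j : ℕ), j ≤ t → ∀ (ω ω' : Fin t → Fin n),
      (∀ i : Fin t, (i:ℕ) < j → ω i = ω' i) → W ω j = W ω' j := by
    intro j
    induction j with
    | zero => intro _ ω ω' _; rw [hW0, hW0]
    | succ j ih =>
      intro hj ω ω' hag
      have hjt : j < t := hj
      have hωj : ω ⟨j, hjt⟩ = ω' ⟨j, hjt⟩ := hag ⟨j, hjt⟩ (Nat.lt_succ_self j)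
      have hWj : W ω j = W ω' j :=
        ih (le_of_lt hjt) ω ω' (fun i hi => hag i (Nat.lt_succ_of_lt hi))
      rw [hWs' ω j hjt, hWs' ω' j hjt, hωj, hWj]
  -- sampled losses
  set Zf : (Fin t → Fin n) → ℕ → ℝ :=
    fun ω k => if h : k < t then lfun (W ω k) (ω ⟨k, h⟩) else 0 with hZf
  clear_value Zf
  have hZf0 : ∀ ω k, 0 ≤ Zf ω k := by
    intro ω k
    simp only [hZf]
    by_cases h : k < t
    · rw [dif_pos h]
      simp only [hlfun]
      exact lf_nonneg _
    · rw [dif_neg h]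
  set ustar : EuclideanSpace ℝ (Fin d) := R • wstar with hustar
  clear_value ustar
  have hunorm : ‖ustar‖ = R := by
    rw [hustar, norm_smul, hwstar, mul_one, Real.norm_eq_abs, abs_of_nonneg hR0]
  set ε := lf (-(Real.log t)) with hε
  have hε0 : 0 ≤ ε := lf_nonneg _
  have hεt : ε * t ≤ 1 := by
    have h1 : ε ≤ (t:ℝ)⁻¹ := by
      rw [hε]
      calc lf (-(Real.log t)) ≤ Real.exp (-(Real.log t)) := lf_neg_le_exp _
        _ = (t:ℝ)⁻¹ := by rw [Real.exp_neg, Real.exp_log ht0]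
    calc ε * t ≤ (t:ℝ)⁻¹ * t := mul_le_mul_of_nonneg_right h1 ht0.le
      _ = 1 := inv_mul_cancel₀ (ne_of_gt ht0)
  clear_value ε
  -- the main energy induction
  have energy : ∀ (ω : Fin t → Fin n) (j : ℕ), j ≤ t →
      ‖W ω j - ustar‖^2 + η * ∑ k ∈ Finset.range j, Zf ω k ≤ R^2 + 2*η*ε*(j:ℝ) := by
    intro ω j
    induction j with
    | zero =>
      intro _
      rw [hW0]
      have h0 : ‖(0:EuclideanSpace ℝ (Fin d)) - ustar‖ = R := by
        rw [zero_sub, norm_neg, hunorm]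
      rw [h0]
      simp
    | succ j ih =>
      intro hj1
      have hjt : j < t := hj1
      have ihj := ih (le_of_lt hjt)
      have hstep := hWs' ω j hjt
      set i : Fin n := ω ⟨j, hjt⟩ with hi
      set w : EuclideanSpace ℝ (Fin d) := W ω j with hw
      set z : EuclideanSpace ℝ (Fin d) := -(y i) • x i + α • (‖w‖⁻¹ • w) with hz
      set a : ℝ := ⟪w, z⟫ with haa
      set s : ℝ := lsig a with hs
      clear_value s a z w i
      have hs0 : 0 ≤ s := by rw [hs]; exact lsig_nonneg a
      -- hstep : W ω (j+1) = w - η • s • z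
      have hkey : ‖W ω (j+1) - ustar‖^2 =
          ‖w - ustar‖^2 - 2*(η * s) * ⟪w - ustar, z⟫ + (η*s)^2 * ‖z‖^2 := by
        rw [hstep]
        have hrw : w - η • s • z - ustar = (w - ustar) - (η * s) • z := by
          rw [smul_smul]; abel
        rw [hrw, norm_sub_sq_real, real_inner_smul_right, norm_smul, Real.norm_eq_abs,
          abs_of_nonneg (by positivity : (0:ℝ) ≤ η * s)]
        ring
      have hub : ⟪ustar, z⟫ ≤ -(R*g) := by
        have h1 : ⟪wstar, z⟫ ≤ -γ + α := by
          rw [hz, inner_add_right, real_inner_smul_right, real_inner_smul_right]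
          have hm : -(y i * ⟪wstar, x i⟫) ≤ -γ := neg_le_neg (hmargin i)
          have hcs : ⟪wstar, (‖w‖⁻¹ • w : EuclideanSpace ℝ (Fin d))⟫ ≤ 1 := by
            calc ⟪wstar, (‖w‖⁻¹ • w : EuclideanSpace ℝ (Fin d))⟫
                ≤ ‖wstar‖ * ‖(‖w‖⁻¹ • w : EuclideanSpace ℝ (Fin d))‖ := real_inner_le_norm _ _
              _ ≤ 1 := by rw [hwstar, one_mul]; exact hwbar w
          have h4 := mul_le_mul_of_nonneg_left hcs hα0
          rw [mul_one] at h4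
          linarith
        have h2 : ⟪ustar, z⟫ = R * ⟪wstar, z⟫ := by
          rw [hustar, real_inner_smul_left]
        rw [h2]
        calc R * ⟪wstar, z⟫ ≤ R * (-γ + α) := mul_le_mul_of_nonneg_left h1 hR0
          _ = -(R * g) := by rw [hgdef]; ring
      have hgrad : lf a - ε ≤ s * ⟪w - ustar, z⟫ := by
        have h1 := grad_ineq a ⟪ustar, z⟫
        have h2 : lf ⟪ustar, z⟫ ≤ ε := by
          calc lf ⟪ustar, z⟫ ≤ lf (-(R*g)) := lf_mono hub
            _ = ε := by rw [hRg, hε]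
        have h3 : ⟪w - ustar, z⟫ = a - ⟪ustar, z⟫ := by
          rw [inner_sub_left, haa]
        rw [h3, hs]
        linarith
      have hquad : (η*s)^2 * ‖z‖^2 ≤ η * lf a := by
        have h1 : ‖z‖^2 ≤ (1+α)^2 := by
          have h1' : ‖z‖ ≤ 1 + α := by rw [hz]; exact hznorm w i
          nlinarith [norm_nonneg z]
        have h2 : (η*s)^2 * ‖z‖^2 ≤ (η*s)^2 * (1+α)^2 :=
          mul_le_mul_of_nonneg_left h1 (by positivity)
        have h3 : (η*s)^2 * (1+α)^2 = η * (η*(1+α)^2) * s^2 := by ring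
        have h4 : η * (η*(1+α)^2) * s^2 ≤ η * 2 * s^2 := by
          apply mul_le_mul_of_nonneg_right _ (sq_nonneg s)
          exact mul_le_mul_of_nonneg_left hηα hηpos.le
        have h5 : η * 2 * s^2 ≤ η * lf a := by
          have h6 := mul_le_mul_of_nonneg_left (two_lsig_sq_le_lf a) hηpos.le
          rw [hs]
          linarith
        linarith
      have hZfj : Zf ω j = lf a := by
        simp only [hZf]
        rw [dif_pos hjt, ← hi, ← hw, haa, hz, hinner w i]
        simp only [hlfun]
      have hsum1 : ∑ k ∈ Finset.range (j+1), Zf ω k =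
          (∑ k ∈ Finset.range j, Zf ω k) + lf a := by
        rw [Finset.sum_range_succ, hZfj]
      have hmul : 2*η*(lf a - ε) ≤ 2*η*(s * ⟪w - ustar, z⟫) :=
        mul_le_mul_of_nonneg_left hgrad (by positivity)
      rw [hkey, hsum1]
      push_cast
      linarith [ihj, hmul, hquad]
  -- norm bound along trajectory
  have hnormW : ∀ (ω : Fin t → Fin n) (j : ℕ), j ≤ t → ‖W ω j‖ ≤ B := by
    intro ω j hj
    have h1 := energy ω j hj
    have h2 : 0 ≤ η * ∑ k ∈ Finset.range j, Zf ω k :=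
      mul_nonneg hηpos.le (Finset.sum_nonneg fun k _ => hZf0 ω k)
    have hjc : (j:ℝ) ≤ t := by exact_mod_cast hj
    have p1 : ε*(j:ℝ) ≤ ε*(t:ℝ) := mul_le_mul_of_nonneg_left hjc hε0
    have p2 : ε*(j:ℝ) ≤ 1 := le_trans p1 hεt
    have h3 : 2*η*ε*(j:ℝ) ≤ 2 := by
      have p3 : 2*η*ε*(j:ℝ) = 2*η*(ε*(j:ℝ)) := by ring
      have p4 : 2*η*(ε*(j:ℝ)) ≤ 2*η*1 := mul_le_mul_of_nonneg_left p2 (by positivity)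
      rw [p3]
      linarith
    have h4 : ‖W ω j - ustar‖^2 ≤ (R+2)^2 := by
      have hx2 : (R+2)^2 = R^2 + 4*R + 4 := by ring
      linarith
    have h5 : ‖W ω j - ustar‖ ≤ R + 2 :=
      (pow_le_pow_iff_left₀ (norm_nonneg _) (by linarith : (0:ℝ) ≤ R+2)
        (by norm_num : 2 ≠ 0)).1 h4
    calc ‖W ω j‖ = ‖(W ω j - ustar) + ustar‖ := by rw [show (W ω j - ustar) + ustar = W ω j from by abel]
      _ ≤ ‖W ω j - ustar‖ + ‖ustar‖ := norm_add_le _ _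
      _ ≤ B := by rw [hunorm, hB]; linarith
  -- bounded losses
  have hlM : ∀ (w : EuclideanSpace ℝ (Fin d)), ‖w‖ ≤ B → ∀ i, lfun w i ≤ M := by
    intro w hwB i
    have hip : |⟪w, x i⟫| ≤ B := by
      calc |⟪w, x i⟫| ≤ ‖w‖ * ‖x i‖ := abs_real_inner_le_norm _ _
        _ ≤ B * 1 := mul_le_mul hwB (hx i) (norm_nonneg _) (by rw [hB]; linarith)
        _ = B := mul_one B
    have harg : -(y i) * ⟪w, x i⟫ + α * ‖w‖ ≤ 4*R + 4 := by
      have h1 : -(y i) * ⟪w, x i⟫ ≤ B := by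
        calc -(y i) * ⟪w, x i⟫ ≤ |(-(y i)) * ⟪w, x i⟫| := le_abs_self _
          _ = |y i| * |⟪w, x i⟫| := by rw [abs_mul, abs_neg]
          _ ≤ B := by rw [hy1 i, one_mul]; exact hip
      have h2 : α * ‖w‖ ≤ 1 * B := by
        apply mul_le_mul hα1' hwB (norm_nonneg _) (by norm_num)
      rw [hB] at h1 h2
      linarith
    have hmax : max (-(y i) * ⟪w, x i⟫ + α * ‖w‖) 0 ≤ 4*R+4 :=
      max_le harg (by linarith)
    calc lfun w i = lf (-(y i) * ⟪w, x i⟫ + α * ‖w‖) := by simp only [hlfun]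
      _ ≤ Real.log 2 + max (-(y i) * ⟪w, x i⟫ + α * ‖w‖) 0 := lf_le _
      _ ≤ 1 + (4*R + 4) := by linarith [log_two_le_one]
      _ = M := by rw [hM]; ring
  -- concentration
  set c := Real.log (1/δ) with hc
  clear_value c
  have hc0 : 0 ≤ c := by
    rw [hc]
    apply Real.log_nonneg
    rw [le_div_iff₀ hδ0, one_mul]
    linarith
  set Afun : (Fin t → Fin n) → ℝ :=
    fun ω => ∑ j ∈ Finset.range t, (Lpop (W ω j)/(4*M) - Zf ω j/(2*M)) with hA
  set G : ℕ → (Fin t → Fin n) → ℝ :=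
    fun j ω => Real.exp (Lpop (W ω j)/(4*M) - Zf ω j/(2*M)) with hG
  clear_value G Afun
  have hGA : ∀ ω, ∏ j ∈ Finset.range t, G j ω = Real.exp (Afun ω) := by
    intro ω
    simp only [hA, hG]
    rw [Real.exp_sum]
  have hexp : ∑ ω : Fin t → Fin n, Real.exp (Afun ω) ≤ (n:ℝ)^t := by
    calc ∑ ω : Fin t → Fin n, Real.exp (Afun ω)
        = ∑ ω : Fin t → Fin n, ∏ j ∈ Finset.range t, G j ω :=
          Finset.sum_congr rfl (fun ω _ => (hGA ω).symm)
      _ ≤ (n:ℝ)^t := by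
          apply sum_prod_le t n hn G
          · intro j ω
            simp only [hG]
            exact Real.exp_nonneg _
          · intro j hjt ω ω' hag
            simp only [hG]
            have hWj : W ω j = W ω' j :=
              hWdep j (le_of_lt hjt) ω ω' (fun i hi => hag i (le_of_lt hi))
            have hZj : Zf ω j = Zf ω' j := by
              simp only [hZf]
              rw [dif_pos hjt, dif_pos hjt, hWj, hag ⟨j, hjt⟩ (le_refl j)]
            rw [hWj, hZj]
          · intro k hk ω
            have hWk : ∀ a : Fin n, W (Function.update ω ⟨k, hk⟩ a) k = W ω k := by
              intro a
              apply hWdep k (le_of_lt hk)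
              intro i hi
              apply Function.update_of_ne
              intro hip
              rw [hip] at hi
              simp at hi
            have hZk : ∀ a : Fin n, Zf (Function.update ω ⟨k, hk⟩ a) k = lfun (W ω k) a := by
              intro a
              simp only [hZf]
              rw [dif_pos hk, hWk a, Function.update_self]
            have hrw : ∀ a : Fin n, G k (Function.update ω ⟨k, hk⟩ a) =
                Real.exp ((1/(n:ℝ)) * (∑ i, lfun (W ω k) i) / (4*M) - lfun (W ω k) a / (2*M)) := by
              intro a
              simp only [hG]
              rw [hWk a, hZk a]
              simp only [hLpop]
            rw [Finset.sum_congr rfl (fun a _ => hrw a)]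
            exact sum_exp_step hn M hM0 (lfun (W ω k)) (fun a => by simp only [hlfun]; exact lf_nonneg _)
              (fun a => hlM _ (hnormW ω k (le_of_lt hk)) a)
  have hexpc : Real.exp c = 1/δ := by rw [hc, Real.exp_log (by positivity)]
  have hbad : ((Finset.univ.filter (fun ω : Fin t → Fin n => c < Afun ω)).card : ℝ) ≤
      δ * (n:ℝ)^t := by
    have hm := markov_count Afun c ((n:ℝ)^t) hexp
    rw [hexpc] at hm
    have h2 := mul_le_mul_of_nonneg_right hm hδ0.le
    have h3 : ((Finset.univ.filter (fun ω : Fin t → Fin n => c < Afun ω)).card : ℝ) * (1/δ) * δ =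
        ((Finset.univ.filter (fun ω : Fin t → Fin n => c < Afun ω)).card : ℝ) := by
      rw [mul_assoc, one_div, inv_mul_cancel₀ (ne_of_gt hδ0), mul_one]
    rw [h3] at h2
    linarith
  -- good sequences satisfy the loss bound
  have hgood : ∀ ω : Fin t → Fin n, Afun ω ≤ c →
      (1 / n : ℝ) * ∑ i, Real.log (1 + Real.exp
          (-(y i) * ⟪(t : ℝ)⁻¹ • ∑ j ∈ Finset.range t, W ω j, x i⟫ +
            α * ‖(t : ℝ)⁻¹ • ∑ j ∈ Finset.range t, W ω j‖)) ≤
        (1 / (η * t)) * (4 * Real.log t / g + 6) *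
          (8 * Real.log t / g ^ 2 + 8 / g + 4 * c) := by
    intro ω hAc
    set what : EuclideanSpace ℝ (Fin d) := (t:ℝ)⁻¹ • ∑ j ∈ Finset.range t, W ω j with hwhat
    clear_value what
    have h4M : (0:ℝ) < 4*M := by linarith
    simp only [hA] at hAc
    have hAsum : ∑ j ∈ Finset.range t, Lpop (W ω j) ≤
        2 * ∑ j ∈ Finset.range t, Zf ω j + 4*M*c := by
      rw [Finset.sum_sub_distrib, ← Finset.sum_div, ← Finset.sum_div] at hAc
      have h2 := mul_le_mul_of_nonneg_right hAc h4M.le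
      have e1 : (∑ j ∈ Finset.range t, Lpop (W ω j))/(4*M)*(4*M) =
          ∑ j ∈ Finset.range t, Lpop (W ω j) := div_mul_cancel₀ _ (ne_of_gt h4M)
      have e2 : (∑ j ∈ Finset.range t, Zf ω j)/(2*M)*(4*M) =
          2 * ∑ j ∈ Finset.range t, Zf ω j := by
        rw [div_mul_eq_mul_div, show (∑ j ∈ Finset.range t, Zf ω j) * (4*M) =
            (2 * ∑ j ∈ Finset.range t, Zf ω j) * (2*M) from by ring,
          mul_div_cancel_right₀ _ (ne_of_gt (by linarith : (0:ℝ) < 2*M))]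
      rw [sub_mul, e1, e2] at h2
      linarith
    have hZsum : ∑ j ∈ Finset.range t, Zf ω j ≤ R^2/η + 2 := by
      have h1 := energy ω t (le_refl t)
      have h2 : (0:ℝ) ≤ ‖W ω t - ustar‖^2 := sq_nonneg _
      have h3 : 2*η*ε*(t:ℝ) ≤ 2*η := by
        have p3 : 2*η*ε*(t:ℝ) = 2*η*(ε*(t:ℝ)) := by ring
        have p4 : 2*η*(ε*(t:ℝ)) ≤ 2*η*1 := mul_le_mul_of_nonneg_left hεt (by positivity)
        rw [p3]
        linarith
      have h4 : η * ∑ j ∈ Finset.range t, Zf ω j ≤ R^2 + 2*η := by linarith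
      have h5 : ∑ j ∈ Finset.range t, Zf ω j ≤ (R^2 + 2*η)/η := by
        rw [le_div_iff₀ hηpos]
        linarith [mul_comm (∑ j ∈ Finset.range t, Zf ω j) η]
      have h6 : (R^2 + 2*η)/η = R^2/η + 2 := by
        rw [add_div, mul_div_cancel_right₀ _ (ne_of_gt hηpos)]
      rw [h6] at h5
      exact h5
    -- Jensen
    have hjen : ∀ i, lfun what i ≤ (t:ℝ)⁻¹ * ∑ j ∈ Finset.range t, lfun (W ω j) i := by
      intro i
      have hip : ⟪what, x i⟫ = (t:ℝ)⁻¹ * ∑ j ∈ Finset.range t, ⟪W ω j, x i⟫ := by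
        rw [hwhat, real_inner_smul_left, sum_inner]
      have hnm : ‖what‖ ≤ (t:ℝ)⁻¹ * ∑ j ∈ Finset.range t, ‖W ω j‖ := by
        rw [hwhat, norm_smul, Real.norm_eq_abs, abs_of_nonneg (inv_nonneg.2 ht0.le)]
        exact mul_le_mul_of_nonneg_left (norm_sum_le _ _) (inv_nonneg.2 ht0.le)
      have harg : -(y i) * ⟪what, x i⟫ + α * ‖what‖ ≤
          (t:ℝ)⁻¹ * ∑ j ∈ Finset.range t, (-(y i) * ⟪W ω j, x i⟫ + α * ‖W ω j‖) := by
        have e1 : ∑ j ∈ Finset.range t, (-(y i) * ⟪W ω j, x i⟫ + α * ‖W ω j‖)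
            = -(y i) * ∑ j ∈ Finset.range t, ⟪W ω j, x i⟫ +
              α * ∑ j ∈ Finset.range t, ‖W ω j‖ := by
          rw [Finset.sum_add_distrib, Finset.mul_sum, Finset.mul_sum]
        have h2 : α * ‖what‖ ≤ α * ((t:ℝ)⁻¹ * ∑ j ∈ Finset.range t, ‖W ω j‖) :=
          mul_le_mul_of_nonneg_left hnm hα0
        have e2 : (t:ℝ)⁻¹ * (-(y i) * ∑ j ∈ Finset.range t, ⟪W ω j, x i⟫ +
            α * ∑ j ∈ Finset.range t, ‖W ω j‖) =
            -(y i) * ((t:ℝ)⁻¹ * ∑ j ∈ Finset.range t, ⟪W ω j, x i⟫) +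
            α * ((t:ℝ)⁻¹ * ∑ j ∈ Finset.range t, ‖W ω j‖) := by ring
        rw [e1, e2, hip]
        linarith
      calc lfun what i = lf (-(y i) * ⟪what, x i⟫ + α * ‖what‖) := by simp only [hlfun]
        _ ≤ lf ((t:ℝ)⁻¹ * ∑ j ∈ Finset.range t, (-(y i) * ⟪W ω j, x i⟫ + α * ‖W ω j‖)) :=
            lf_mono harg
        _ ≤ (t:ℝ)⁻¹ * ∑ j ∈ Finset.range t, lf (-(y i) * ⟪W ω j, x i⟫ + α * ‖W ω j‖) := by
            have hj1 := jensen_avg t (fun j => -(y i) * ⟪W ω j, x i⟫ + α * ‖W ω j‖)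
            have h2 := mul_le_mul_of_nonneg_left hj1 (inv_nonneg.2 ht0.le)
            rw [← mul_assoc, inv_mul_cancel₀ (ne_of_gt ht0), one_mul] at h2
            exact h2
        _ = (t:ℝ)⁻¹ * ∑ j ∈ Finset.range t, lfun (W ω j) i := by simp only [hlfun]
    have hLhat : Lpop what ≤ (t:ℝ)⁻¹ * ∑ j ∈ Finset.range t, Lpop (W ω j) := by
      simp only [hLpop]
      have h1 : ∑ i, lfun what i ≤ ∑ i, (t:ℝ)⁻¹ * ∑ j ∈ Finset.range t, lfun (W ω j) i :=
        Finset.sum_le_sum (fun i _ => hjen i)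
      have h2 : ∑ i, (t:ℝ)⁻¹ * ∑ j ∈ Finset.range t, lfun (W ω j) i
          = (t:ℝ)⁻¹ * ∑ j ∈ Finset.range t, ∑ i, lfun (W ω j) i := by
        rw [← Finset.mul_sum, Finset.sum_comm]
      calc (1/(n:ℝ)) * ∑ i, lfun what i
          ≤ (1/(n:ℝ)) * ((t:ℝ)⁻¹ * ∑ j ∈ Finset.range t, ∑ i, lfun (W ω j) i) := by
            apply mul_le_mul_of_nonneg_left _ (by positivity)
            rw [← h2]
            exact h1
        _ = (t:ℝ)⁻¹ * ∑ j ∈ Finset.range t, (1/(n:ℝ)) * ∑ i, lfun (W ω j) i := by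
            rw [← Finset.mul_sum]
            ring
    have hfinal : (t:ℝ)⁻¹ * (2*(R^2/η + 2) + 4*M*c) ≤
        (1 / (η * (t:ℝ))) * (4 * Real.log t / g + 6) *
          (8 * Real.log t / g ^ 2 + 8 / g + 4 * c) := by
      have hlog4 : 4 * Real.log (t:ℝ) / g = 4 * R := by
        rw [← hRg, ← mul_assoc, mul_div_cancel_right₀ _ (ne_of_gt hg0)]
      have hlog8 : 8 * Real.log (t:ℝ) / g ^ 2 = 8 * R / g := by
        rw [← hRg, ← mul_assoc, pow_two, ← div_div, mul_div_cancel_right₀ _ (ne_of_gt hg0)]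
      rw [hlog4, hlog8]
      have h8R : 8 * R ≤ 8 * R / g := by
        rw [le_div_iff₀ hg0]
        have := mul_le_mul_of_nonneg_left hg1 (by linarith : (0:ℝ) ≤ 8*R)
        linarith
      have h8 : (8:ℝ) ≤ 8 / g := by
        rw [le_div_iff₀ hg0]
        linarith
      have hRHS1 : (4*R + 6) * (8*R + 8 + 4*c) ≤ (4*R + 6) * (8*R/g + 8/g + 4*c) := by
        apply mul_le_mul_of_nonneg_left _ (by linarith)
        linarith
      have hmain : η * (2*(R^2/η + 2) + 4*M*c) ≤ (4*R+6) * (8*R/g + 8/g + 4*c) := by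
        have e4 : η * (2*(R^2/η + 2) + 4*M*c) = 2*(R^2/η*η) + 4*η + 4*η*M*c := by ring
        have e5 : R^2/η*η = R^2 := div_mul_cancel₀ _ (ne_of_gt hηpos)
        rw [e4, e5]
        have hMc : 0 ≤ M*c := mul_nonneg hM0.le hc0
        have q0 : 4*η*M*c ≤ 4*(M*c) :=
          by linarith [mul_le_mul_of_nonneg_right hη1 hMc]
        have q1 : 4*(M*c) = (16*R+20)*c := by rw [hM]; ring
        have q2 : (16*R+20)*c ≤ (16*R+24)*c :=
          mul_le_mul_of_nonneg_right (by linarith) hc0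
        have q3 : 2*R^2 + 4*η ≤ 32*R^2 + 80*R + 48 := by
          linarith [sq_nonneg R, hR0, hη1]
        have ering : (4*R+6)*(8*R + 8 + 4*c) = 32*R^2 + 80*R + 48 + (16*R+24)*c := by
          ring
        calc 2*R^2 + 4*η + 4*η*M*c ≤ (4*R+6)*(8*R + 8 + 4*c) := by
              rw [ering]
              linarith
          _ ≤ (4*R+6)*(8*R/g + 8/g + 4*c) := hRHS1
      have hfac := mul_le_mul_of_nonneg_left hmain
        (show (0:ℝ) ≤ 1/(η*(t:ℝ)) by positivity)
      have e3 : (1/(η*(t:ℝ))) * (η * (2*(R^2/η + 2) + 4*M*c)) =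
          (t:ℝ)⁻¹ * (2*(R^2/η + 2) + 4*M*c) := by
        rw [one_div, mul_inv, mul_comm η⁻¹ ((t:ℝ))⁻¹, mul_assoc, ← mul_assoc η⁻¹ η,
          inv_mul_cancel₀ (ne_of_gt hηpos), one_mul]
      rw [e3] at hfac
      exact hfac.trans_eq (mul_assoc _ _ _).symm
    calc (1 / n : ℝ) * ∑ i, Real.log (1 + Real.exp
            (-(y i) * ⟪what, x i⟫ + α * ‖what‖))
        = Lpop what := by simp only [hLpop, hlfun, lf_eq]
      _ ≤ (t:ℝ)⁻¹ * ∑ j ∈ Finset.range t, Lpop (W ω j) := hLhat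
      _ ≤ (t:ℝ)⁻¹ * (2 * ∑ j ∈ Finset.range t, Zf ω j + 4*M*c) := by
          apply mul_le_mul_of_nonneg_left hAsum (by positivity)
      _ ≤ (t:ℝ)⁻¹ * (2*(R^2/η + 2) + 4*M*c) := by
          apply mul_le_mul_of_nonneg_left _ (by positivity)
          linarith
      _ ≤ (1 / (η * (t:ℝ))) * (4 * Real.log t / g + 6) *
          (8 * Real.log t / g ^ 2 + 8 / g + 4 * c) := hfinal
  -- final counting
  have hcard : ((Fintype.card (Fin t → Fin n)) : ℝ) = (n:ℝ)^t := by
    simp [Fintype.card_fun]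
  have h2 : ((Finset.univ.filter (fun ω : Fin t → Fin n => c < Afun ω)).card : ℝ) +
      ((Finset.univ.filter (fun ω : Fin t → Fin n => ¬ (c < Afun ω))).card : ℝ) =
      ((Fintype.card (Fin t → Fin n)) : ℝ) := by
    rw [← Finset.card_univ]
    exact_mod_cast Finset.card_filter_add_card_filter_not
      (s := (Finset.univ : Finset (Fin t → Fin n))) (p := fun ω => c < Afun ω)
  have h3 : (1 - δ) * ((Fintype.card (Fin t → Fin n)) : ℝ) ≤
      ((Finset.univ.filter (fun ω : Fin t → Fin n => ¬ (c < Afun ω))).card : ℝ) := by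
    rw [hcard] at h2 ⊢
    linarith [hbad, h2]
  refine le_trans h3 ?_
  have hsub : (Finset.univ.filter (fun ω : Fin t → Fin n => ¬ (c < Afun ω))) ⊆
      (Finset.univ.filter (fun ω : Fin t → Fin n =>
        (1 / n : ℝ) * ∑ i, Real.log (1 + Real.exp
            (-(y i) * ⟪(t : ℝ)⁻¹ • ∑ j ∈ Finset.range t, W ω j, x i⟫ +
              α * ‖(t : ℝ)⁻¹ • ∑ j ∈ Finset.range t, W ω j‖)) ≤
          (1 / (η * t)) * (4 * Real.log t / g + 6) *
            (8 * Real.log t / g ^ 2 + 8 / g + 4 * c))) := by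
    intro ω hω
    simp only [Finset.mem_filter, Finset.mem_univ, true_and] at hω ⊢
    exact hgood ω (not_lt.1 hω)
  exact_mod_cast Finset.card_le_card hsub
end

section
/- Let f(u) = ln(1+exp(u)), let S = {(x_i,y_i)}_{i=1}^n ⊂ R^d × {±1} with ‖x_i‖ ≤ 1, suppose a unit vector w* satisfies y_i⟨w*,x_i⟩ ≥ γ for all i with γ ≤ 1, and let 0 ≤ α < γ. Let {w_t} be the α-GD iterates with w₀ = 0, η₀ = 1, and arbitrary positive step sizes η_t for t ≥ 1. Then for every t ≥ 1, ⟨w_t, w*⟩ ≥ (γ−α)/2; consequently every point v on the segment between w_t and w_{t+1} (t ≥ 1) satisfies ‖v‖ ≥ (γ−α)/2. -/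
open scoped RealInnerProductSpace

lemma logexp_deriv (u : ℝ) :
    deriv (fun u => Real.log (1 + Real.exp u)) u = Real.exp u / (1 + Real.exp u) := by
  have h1 : HasDerivAt (fun u => 1 + Real.exp u) (Real.exp u) u :=
    (Real.hasDerivAt_exp u).const_add 1
  have h2 := h1.log (by positivity)
  simpa using h2.deriv

lemma logexp_deriv_nonneg (u : ℝ) :
    0 ≤ deriv (fun u => Real.log (1 + Real.exp u)) u := by
  rw [logexp_deriv]; positivity

lemma logexp_deriv_zero :
    deriv (fun u => Real.log (1 + Real.exp u)) 0 = 1 / 2 := by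
  rw [logexp_deriv]; norm_num

/-- along `α`-GD for logistic regression with `w₀ = 0`, `η₀ = 1`, and
arbitrary positive step sizes, `⟪w_t, w*⟫ ≥ (γ−α)/2` for all `t ≥ 1`; consequently every
point on the segment between `w_t` and `w_{t+1}` has norm at least `(γ−α)/2`. -/
theorem alpha_gd_iterates_bounded_away_from_zero
    (d n : ℕ) (hn : 0 < n) (x : Fin n → EuclideanSpace ℝ (Fin d)) (y : Fin n → ℝ)
    (hx : ∀ i, ‖x i‖ ≤ 1) (hy : ∀ i, y i = 1 ∨ y i = -1)
    (wstar : EuclideanSpace ℝ (Fin d)) (hwstar : ‖wstar‖ = 1)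
    (γ α : ℝ) (hγ1 : γ ≤ 1) (hmargin : ∀ i, γ ≤ y i * ⟪wstar, x i⟫)
    (hα0 : 0 ≤ α) (hαγ : α < γ)
    (η : ℕ → ℝ) (hη0 : η 0 = 1) (hηpos : ∀ t, 1 ≤ t → 0 < η t)
    (w : ℕ → EuclideanSpace ℝ (Fin d)) (hw0 : w 0 = 0)
    (hupd : ∀ t : ℕ, w (t + 1) = w t - (η t / n) •
      ∑ i, deriv (fun u => Real.log (1 + Real.exp u)) (-(y i) * ⟪w t, x i⟫ + α * ‖w t‖) •
        (-(y i) • x i + α • (‖w t‖⁻¹ • w t))) :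
    ∀ t : ℕ, 1 ≤ t →
      (γ - α) / 2 ≤ ⟪w t, wstar⟫ ∧
      ∀ v ∈ segment ℝ (w t) (w (t + 1)), (γ - α) / 2 ≤ ‖v‖ := by
  set D : ℕ → Fin n → ℝ := fun t i =>
    deriv (fun u => Real.log (1 + Real.exp u)) (-(y i) * ⟪w t, x i⟫ + α * ‖w t‖) with hD
  have hnR : (0:ℝ) < (n:ℝ) := by exact_mod_cast hn
  -- inner product recursion
  have hinner : ∀ t : ℕ, ⟪w (t+1), wstar⟫ = ⟪w t, wstar⟫ -
      (η t / n) * ∑ i, D t i * (-(y i) * ⟪x i, wstar⟫ + α * (‖w t‖⁻¹ * ⟪w t, wstar⟫)) := by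
    intro t
    rw [hupd t, inner_sub_left, real_inner_smul_left, sum_inner]
    congr 2
    refine Finset.sum_congr rfl (fun i _ => ?_)
    rw [real_inner_smul_left, inner_add_left, real_inner_smul_left, real_inner_smul_left,
      real_inner_smul_left]
  -- bound on normalized inner product
  have hc : ∀ t, ‖w t‖⁻¹ * ⟪w t, wstar⟫ ≤ 1 := by
    intro t
    rcases eq_or_ne (w t) 0 with h | h
    · simp [h]
    · have h1 : ⟪w t, wstar⟫ ≤ ‖w t‖ := by
        have := real_inner_le_norm (w t) wstar
        simpa [hwstar] using this
      have h2 : (0:ℝ) < ‖w t‖ := norm_pos_iff.mpr h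
      rw [inv_mul_le_iff₀ h2]
      simpa using h1
  have hmargin' : ∀ i, γ ≤ y i * ⟪x i, wstar⟫ := by
    intro i; rw [real_inner_comm]; exact hmargin i
  -- each summand bound
  have hsummand : ∀ t i, D t i * (-(y i) * ⟪x i, wstar⟫ + α * (‖w t‖⁻¹ * ⟪w t, wstar⟫))
      ≤ D t i * (α - γ) := by
    intro t i
    have hD0 : 0 ≤ D t i := logexp_deriv_nonneg _
    have h1 := hmargin' i
    have h2 : α * (‖w t‖⁻¹ * ⟪w t, wstar⟫) ≤ α * 1 :=
      mul_le_mul_of_nonneg_left (hc t) hα0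
    have h4 : -(y i) * ⟪x i, wstar⟫ + α * (‖w t‖⁻¹ * ⟪w t, wstar⟫) ≤ α - γ := by
      linarith
    exact mul_le_mul_of_nonneg_left h4 hD0
  have hz : ‖w 0‖⁻¹ * ⟪w 0, wstar⟫ = 0 := by rw [hw0]; simp
  have hbase1 : (γ - α) / 2 ≤ ⟪w 1, wstar⟫ := by
    have h0 : ∀ i, D 0 i = 1/2 := by
      intro i
      have harg : -(y i) * ⟪w 0, x i⟫ + α * ‖w 0‖ = 0 := by rw [hw0]; simp
      rw [hD]; simp only; rw [harg]; exact logexp_deriv_zero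
    have hsum : ∑ i, D 0 i * (-(y i) * ⟪x i, wstar⟫ + α * (‖w 0‖⁻¹ * ⟪w 0, wstar⟫))
        ≤ ∑ _i : Fin n, (-((γ - α)/2)) := by
      refine Finset.sum_le_sum (fun i _ => ?_)
      rw [h0 i, hz]
      have := hmargin' i
      nlinarith
    have hsum' : ∑ i, D 0 i * (-(y i) * ⟪x i, wstar⟫ + α * (‖w 0‖⁻¹ * ⟪w 0, wstar⟫))
        ≤ -((n:ℝ) * ((γ - α)/2)) := by
      rw [Finset.sum_const, Finset.card_univ, Fintype.card_fin, nsmul_eq_mul] at hsum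
      linarith [hsum]
    have heq := hinner 0
    rw [hη0] at heq
    have hz0 : ⟪w 0, wstar⟫ = (0:ℝ) := by rw [hw0]; simp
    rw [show w 1 = w (0 + 1) from rfl, heq, hz0]
    have h1 : (1:ℝ) / n * ∑ i, D 0 i * (-(y i) * ⟪x i, wstar⟫ + α * (‖w 0‖⁻¹ * ⟪w 0, wstar⟫))
        ≤ (1:ℝ) / n * (-((n:ℝ) * ((γ - α)/2))) :=
      mul_le_mul_of_nonneg_left hsum' (by positivity)
    have h2 : (1:ℝ) / n * (-((n:ℝ) * ((γ - α)/2))) = -((γ - α)/2) := by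
      field_simp
    rw [h2] at h1
    rw [hz0] at h1
    linarith
  -- monotone step for t ≥ 1
  have hmono : ∀ t : ℕ, 1 ≤ t → ⟪w t, wstar⟫ ≤ ⟪w (t+1), wstar⟫ := by
    intro t ht
    rw [hinner t]
    have hsum : ∑ i, D t i * (-(y i) * ⟪x i, wstar⟫ + α * (‖w t‖⁻¹ * ⟪w t, wstar⟫)) ≤ 0 := by
      refine Finset.sum_nonpos (fun i _ => ?_)
      have h1 := hsummand t i
      have hD0 : 0 ≤ D t i := logexp_deriv_nonneg _
      nlinarith
    have hη : 0 ≤ η t / n := le_of_lt (div_pos (hηpos t ht) hnR)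
    nlinarith
  have hkey : ∀ t : ℕ, 1 ≤ t → (γ - α) / 2 ≤ ⟪w t, wstar⟫ := by
    intro t ht
    induction t with
    | zero => omega
    | succ k ih =>
      rcases Nat.eq_or_lt_of_le ht with h | h
      · have hk0 : k = 0 := by omega
        subst hk0
        exact hbase1
      · have hk : 1 ≤ k := by omega
        exact le_trans (ih hk) (hmono k hk)
  intro t ht
  refine ⟨hkey t ht, ?_⟩
  rintro v ⟨a, b, ha, hb, hab, rfl⟩
  have h1 := hkey t ht
  have h2 := hkey (t+1) (by omega)
  have hv : (γ - α)/2 ≤ ⟪a • w t + b • w (t+1), wstar⟫ := by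
    rw [inner_add_left, real_inner_smul_left, real_inner_smul_left]
    nlinarith
  have h3 : ⟪a • w t + b • w (t+1), wstar⟫ ≤ ‖a • w t + b • w (t+1)‖ := by
    have := real_inner_le_norm (a • w t + b • w (t+1)) wstar
    simpa [hwstar] using this
  linarith
end
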